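/- arXiv:2104.11204 — 3 statements merged into one kernel-verified Lean document; each statement's English description precedes it below -/
import Mathlib

section
/- Let Q be a regular couple. There is exactly one perfect matching of the set of branching nodes of Q with the property that for every d ≥ 1, every L > 0, every β ∈ (ℝ⁺)^d, every decoration of Q and every matched pair {n, n'}, one has ζ_{n'} Ω_{n'} = − ζ_n Ω_n, where ζ_n ∈ {+1,−1} denotes the sign of the node n. -/
namespace WKE

/-! Combinatorial framework: ternary trees, couples, steps A and B, regular couples.
Following Deng–Hani, "Full derivation of the wave kinetic equation". -/

/-- A ternary tree: every non-leaf (branching) node has exactly three ordered children. -/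
inductive TTree : Type where
  | leaf : TTree
  | node : TTree → TTree → TTree → TTree
  deriving DecidableEq

/-- The scale of a tree: its number of branching nodes. -/
def TTree.scale : TTree → ℕ
  | .leaf => 0
  | .node a b c => a.scale + b.scale + c.scale + 1

/-- A position (address) of a node in a ternary tree. -/
abbrev Pos : Type := List (Fin 3)

/-- A node of a couple: a side (`true` = the `+` tree) together with a position. -/
abbrev NodeId : Type := Bool × Pos

/-- The subtree at a given position, if the position is valid. -/
def TTree.subtreeAt? : TTree → Pos → Option TTree
  | t, [] => some t
  | .leaf, _ :: _ => none
  | .node a _ _, ⟨0, _⟩ :: p => a.subtreeAt? p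
  | .node _ b _, ⟨1, _⟩ :: p => b.subtreeAt? p
  | .node _ _ c, ⟨_ + 2, _⟩ :: p => c.subtreeAt? p

/-- `p` is the position of a leaf of `t`. -/
def TTree.IsLeafPos (t : TTree) (p : Pos) : Prop := t.subtreeAt? p = some .leaf

/-- `p` is the position of a branching node of `t`. -/
def TTree.IsBranchPos (t : TTree) (p : Pos) : Prop :=
  ∃ a b c, t.subtreeAt? p = some (.node a b c)

instance (t : TTree) (p : Pos) : Decidable (t.IsLeafPos p) := by
  unfold TTree.IsLeafPos; infer_instance

/-- The sign of the node at position `p` in a tree whose root has sign `b`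
(`true` = `+`): the sign flips exactly when passing to a middle child. -/
def posSign (b : Bool) (p : Pos) : Bool := Bool.xor b (p.count (1 : Fin 3) % 2 == 1)

/-- A couple: a pair of ternary trees of signs `+` and `-`, together with a partition of the
set of all leaves into pairs of leaves of opposite signs.  The pairing is encoded as a
fixed-point-free involution of the set of leaves, extended by the identity off the leaves. -/
structure Couple where
  pos : TTree
  neg : TTree
  pair : NodeId → NodeId
  pair_leaf : ∀ x : NodeId, (cond x.1 pos neg).IsLeafPos x.2 →
    (cond (pair x).1 pos neg).IsLeafPos (pair x).2
  pair_invol : ∀ x : NodeId, (cond x.1 pos neg).IsLeafPos x.2 → pair (pair x) = x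
  pair_ne : ∀ x : NodeId, (cond x.1 pos neg).IsLeafPos x.2 → pair x ≠ x
  pair_sign : ∀ x : NodeId, (cond x.1 pos neg).IsLeafPos x.2 →
    posSign (pair x).1 (pair x).2 = !(posSign x.1 x.2)
  pair_norm : ∀ x : NodeId, ¬ (cond x.1 pos neg).IsLeafPos x.2 → pair x = x

/-- The tree of a couple on a given side. -/
def Couple.treeOf (Q : Couple) (b : Bool) : TTree := cond b Q.pos Q.neg

/-- `x` is a leaf of the couple `Q`. -/
def Couple.IsLeaf (Q : Couple) (x : NodeId) : Prop := (Q.treeOf x.1).IsLeafPos x.2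

/-- `x` is a branching node of the couple `Q`. -/
def Couple.IsBranch (Q : Couple) (x : NodeId) : Prop := (Q.treeOf x.1).IsBranchPos x.2

/-- `x` is a node of the couple `Q`. -/
def Couple.IsNode (Q : Couple) (x : NodeId) : Prop := ((Q.treeOf x.1).subtreeAt? x.2).isSome

/-- The scale of a couple: the sum of the scales of its two trees. -/
def Couple.scale (Q : Couple) : ℕ := Q.pos.scale + Q.neg.scale

theorem isLeafPos_leaf_iff (p : Pos) : TTree.IsLeafPos .leaf p ↔ p = [] := by
  cases p with
  | nil => simp [TTree.IsLeafPos, TTree.subtreeAt?]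
  | cons i q => simp [TTree.IsLeafPos, TTree.subtreeAt?]

/-- The pairing of the trivial couple: the two roots are paired. -/
def trivPair : NodeId → NodeId := fun x =>
  if x = ((true, []) : NodeId) then ((false, []) : NodeId)
  else if x = ((false, []) : NodeId) then ((true, []) : NodeId) else x

/-- The trivial couple: two single-node trees with their roots paired. -/
def trivialCouple : Couple where
  pos := .leaf
  neg := .leaf
  pair := trivPair
  pair_leaf := by
    rintro ⟨b, p⟩ hp
    have hp' : p = [] := by cases b <;> exact (isLeafPos_leaf_iff p).mp hp
    subst hp'
    cases b <;> decide
  pair_invol := by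
    rintro ⟨b, p⟩ hp
    have hp' : p = [] := by cases b <;> exact (isLeafPos_leaf_iff p).mp hp
    subst hp'
    cases b <;> decide
  pair_ne := by
    rintro ⟨b, p⟩ hp
    have hp' : p = [] := by cases b <;> exact (isLeafPos_leaf_iff p).mp hp
    subst hp'
    cases b <;> decide
  pair_sign := by
    rintro ⟨b, p⟩ hp
    have hp' : p = [] := by cases b <;> exact (isLeafPos_leaf_iff p).mp hp
    subst hp'
    cases b <;> decide
  pair_norm := by
    rintro ⟨b, p⟩ hp
    rcases p with _ | ⟨i, q⟩
    · exfalso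
      apply hp
      cases b <;> exact (isLeafPos_leaf_iff []).mpr rfl
    · simp [trivPair]

/-- Replace the subtree at position `p` of `t` by `s`. -/
def TTree.replaceAt : TTree → Pos → TTree → TTree
  | _, [], s => s
  | .leaf, _ :: _, _ => .leaf
  | .node a b c, ⟨0, _⟩ :: p, s => .node (a.replaceAt p s) b c
  | .node a b c, ⟨1, _⟩ :: p, s => .node a (b.replaceAt p s) c
  | .node a b c, ⟨_ + 2, _⟩ :: p, s => .node a b (c.replaceAt p s)

/-- The ternary tree of scale 1. -/
def oneTree : TTree := .node .leaf .leaf .leaf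

/-- Normalize a candidate pairing function: act by `f` on the leaves of the couple with
trees `P`, `N`, and by the identity elsewhere. -/
def normalizePair (P N : TTree) (f : NodeId → NodeId) : NodeId → NodeId :=
  fun x => if (cond x.1 P N).IsLeafPos x.2 then f x else x

/-- The transposition of `0` and `2` in `Fin 3`. -/
def swap02 : Fin 3 → Fin 3 := fun i => if i = 0 then 2 else if i = 2 then 0 else 1

/-- The new (raw) pairing after step A performed at the leaf pair `{l, l'}`; the children
of `l` are paired to the children of `l'` according to `σ` (which is `id` or `swap02`),
corresponding to the two possible (1,1)-mini couples. -/
def stepAPairRaw (f : NodeId → NodeId) (l l' : NodeId) (σ : Fin 3 → Fin 3) :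
    NodeId → NodeId := fun x =>
  if x = (l.1, l.2 ++ [(0 : Fin 3)]) then (l'.1, l'.2 ++ [σ 0])
  else if x = (l.1, l.2 ++ [(1 : Fin 3)]) then (l'.1, l'.2 ++ [σ 1])
  else if x = (l.1, l.2 ++ [(2 : Fin 3)]) then (l'.1, l'.2 ++ [σ 2])
  else if x = (l'.1, l'.2 ++ [σ 0]) then (l.1, l.2 ++ [(0 : Fin 3)])
  else if x = (l'.1, l'.2 ++ [σ 1]) then (l.1, l.2 ++ [(1 : Fin 3)])
  else if x = (l'.1, l'.2 ++ [σ 2]) then (l.1, l.2 ++ [(2 : Fin 3)])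
  else f x

/-- Graft the tree `s` at the positions of `l` and of `l'` that lie on the side `c`. -/
def graft2 (t : TTree) (c : Bool) (l l' : NodeId) (s : TTree) : TTree :=
  let t1 := if l.1 = c then t.replaceAt l.2 s else t
  if l'.1 = c then t1.replaceAt l'.2 s else t1

/-- Step A: `Q'` is obtained from `Q` by replacing a pair of paired leaves by a
(1,1)-mini couple. -/
def StepA (Q Q' : Couple) : Prop :=
  ∃ (l : NodeId) (σ : Fin 3 → Fin 3),
    Q.IsLeaf l ∧ (σ = id ∨ σ = swap02) ∧
    Q'.pos = graft2 Q.pos true l (Q.pair l) oneTree ∧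
    Q'.neg = graft2 Q.neg false l (Q.pair l) oneTree ∧
    Q'.pair = normalizePair Q'.pos Q'.neg (stepAPairRaw Q.pair l (Q.pair l) σ)

/-- The relative position (among the grandchildren) of the lone leaf of the mini tree with
parameters `(i, v)`. -/
def loneIdx (i : Fin 3) (v : Bool) : Fin 3 := if i = 1 then 1 else cond v 0 2

/-- The two leaf pairs (as relative positions) of the mini tree with parameters `(i, v)`:
`i` is the index of the child of the root which is a branching node, and `v` selects one of
the two admissible pairings; together `(i, v)` ranges over the six possible mini trees. -/
def bPairs (i : Fin 3) (v : Bool) : (Pos × Pos) × (Pos × Pos) :=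
  if i = 1 then
    cond v ((([0], [1, 2]), ([2], [1, 0]))) ((([0], [1, 0]), ([2], [1, 2])))
  else if i = 0 then
    (([2], [0, 1]), cond v ([1], [0, 2]) ([1], [0, 0]))
  else
    (([0], [2, 1]), cond v ([1], [2, 2]) ([1], [2, 0]))

/-- The branching child of the root of a mini tree: the subtree `S` is reattached at the
lone leaf (grandchild number `lone`). -/
def gchildT (lone : Fin 3) (S : TTree) : TTree :=
  .node (if lone = 0 then S else .leaf) (if lone = 1 then S else .leaf)
    (if lone = 2 then S else .leaf)

/-- The mini tree with branching child in position `i` and the subtree `S` reattached at the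
lone leaf (grandchild number `lone`). -/
def miniT (i lone : Fin 3) (S : TTree) : TTree :=
  .node (if i = 0 then gchildT lone S else .leaf) (if i = 1 then gchildT lone S else .leaf)
    (if i = 2 then gchildT lone S else .leaf)

/-- Relabelling of positions under step B performed at `(c, q)`: nodes below `q` on side `c`
move below the lone leaf `q ++ [i, lone]`. -/
def bump (c : Bool) (q : Pos) (i lone : Fin 3) (x : NodeId) : NodeId :=
  if x.1 = c ∧ q <+: x.2 then (x.1, q ++ i :: lone :: x.2.drop q.length) else x

/-- The new (raw) pairing after step B performed at `(c, q)` with mini tree parameters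
`(i, v)`. -/
def stepBPairRaw (f : NodeId → NodeId) (c : Bool) (q : Pos) (i : Fin 3) (v : Bool) :
    NodeId → NodeId := fun x =>
  if x = (c, q ++ (bPairs i v).1.1) then (c, q ++ (bPairs i v).1.2)
  else if x = (c, q ++ (bPairs i v).1.2) then (c, q ++ (bPairs i v).1.1)
  else if x = (c, q ++ (bPairs i v).2.1) then (c, q ++ (bPairs i v).2.2)
  else if x = (c, q ++ (bPairs i v).2.2) then (c, q ++ (bPairs i v).2.1)
  else if x.1 = c ∧ (q ++ [i, loneIdx i v]) <+: x.2 then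
    bump c q i (loneIdx i v) (f (c, q ++ x.2.drop (q.length + 2)))
  else bump c q i (loneIdx i v) (f x)

/-- Step B performed at the node `(c, q)` with mini tree parameters `(i, v)`: the node is
replaced by a mini tree, the subtree originally rooted there being reattached at the lone
leaf of the mini tree. -/
def StepBAt (Q Q' : Couple) (c : Bool) (q : Pos) (i : Fin 3) (v : Bool) : Prop :=
  ∃ S : TTree, (Q.treeOf c).subtreeAt? q = some S ∧
    Q'.treeOf c = (Q.treeOf c).replaceAt q (miniT i (loneIdx i v) S) ∧
    Q'.treeOf (!c) = Q.treeOf (!c) ∧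
    Q'.pair = normalizePair Q'.pos Q'.neg (stepBPairRaw Q.pair c q i v)

/-- Step B: `Q'` is obtained from `Q` by replacing some node by a mini tree. -/
def StepB (Q Q' : Couple) : Prop := ∃ c q i v, StepBAt Q Q' c q i v

/-- One application of step A or step B. -/
def Step (Q Q' : Couple) : Prop := StepA Q Q' ∨ StepB Q Q'

/-- A regular couple: one obtained from the trivial couple by finitely many applications of
steps A and B. -/
def Regular (Q : Couple) : Prop := Relation.ReflTransGen Step trivialCouple Q

/-- The weighted square norm `|x|_β² = ∑ j, β j * (x j)²`. -/
noncomputable def normSqB (d : ℕ) (β : Fin d → ℝ) (x : Fin d → ℝ) : ℝ :=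
  ∑ j, β j * x j ^ 2

/-- The `i`-th child of the node `x`. -/
def childId (x : NodeId) (i : Fin 3) : NodeId := (x.1, x.2 ++ [i])

/-- A decoration of the couple `Q` over `Z_L^d = (L⁻¹ℤ)^d`: every node carries a vector of
`Z_L^d`, with `k_n = k_{n₁} - k_{n₂} + k_{n₃}` at each branching node, and equal vectors on
paired leaves. -/
def IsDecoration (Q : Couple) (d : ℕ) (L : ℝ) (k : NodeId → Fin d → ℝ) : Prop :=
  (∀ x : NodeId, Q.IsNode x → ∀ j, ∃ m : ℤ, k x j = m / L) ∧
  (∀ x : NodeId, Q.IsBranch x → ∀ j,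
    k x j = k (childId x 0) j - k (childId x 1) j + k (childId x 2) j) ∧
  (∀ l : NodeId, Q.IsLeaf l → k (Q.pair l) = k l)

/-- The resonance factor `Ω_n = |k_{n₁}|_β² - |k_{n₂}|_β² + |k_{n₃}|_β² - |k_n|_β²` at a
branching node. -/
noncomputable def OmegaN (d : ℕ) (β : Fin d → ℝ) (k : NodeId → Fin d → ℝ) (x : NodeId) : ℝ :=
  normSqB d β (k (childId x 0)) - normSqB d β (k (childId x 1)) +
    normSqB d β (k (childId x 2)) - normSqB d β (k x)

/-- The sign `ζ_n ∈ {+1, -1}` of a node, as a real number. -/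
noncomputable def signR (x : NodeId) : ℝ := if posSign x.1 x.2 = true then 1 else -1

/-! ### Auxiliary lemmas: basic tree position lemmas -/

@[simp] theorem subtreeAt?_nil (t : TTree) : t.subtreeAt? [] = some t := by cases t <;> rfl

@[simp] theorem subtreeAt?_leaf_cons (i : Fin 3) (p : Pos) :
    TTree.leaf.subtreeAt? (i :: p) = none := rfl

@[simp] theorem subtreeAt?_node0 (a b c : TTree) (p : Pos) :
    (TTree.node a b c).subtreeAt? ((0 : Fin 3) :: p) = a.subtreeAt? p := rfl

@[simp] theorem subtreeAt?_node1 (a b c : TTree) (p : Pos) :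
    (TTree.node a b c).subtreeAt? ((1 : Fin 3) :: p) = b.subtreeAt? p := rfl

@[simp] theorem subtreeAt?_node2 (a b c : TTree) (p : Pos) :
    (TTree.node a b c).subtreeAt? ((2 : Fin 3) :: p) = c.subtreeAt? p := rfl

theorem subtreeAt?_append (t : TTree) (p r : Pos) :
    t.subtreeAt? (p ++ r) = (t.subtreeAt? p).bind (fun s => s.subtreeAt? r) := by
  induction p generalizing t with
  | nil => simp
  | cons i p ih =>
    cases t with
    | leaf => simp
    | node a b c => fin_cases i <;> simp [ih]

@[simp] theorem replaceAt_nil (t s : TTree) : t.replaceAt [] s = s := by cases t <;> rfl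

@[simp] theorem replaceAt_leaf_cons (i : Fin 3) (p : Pos) (s : TTree) :
    TTree.leaf.replaceAt (i :: p) s = .leaf := rfl

@[simp] theorem replaceAt_node0 (a b c s : TTree) (p : Pos) :
    (TTree.node a b c).replaceAt ((0 : Fin 3) :: p) s = .node (a.replaceAt p s) b c := rfl

@[simp] theorem replaceAt_node1 (a b c s : TTree) (p : Pos) :
    (TTree.node a b c).replaceAt ((1 : Fin 3) :: p) s = .node a (b.replaceAt p s) c := rfl

@[simp] theorem replaceAt_node2 (a b c s : TTree) (p : Pos) :
    (TTree.node a b c).replaceAt ((2 : Fin 3) :: p) s = .node a b (c.replaceAt p s) := rfl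

theorem subtreeAt?_replaceAt_append (t s : TTree) (q : Pos)
    (hq : (t.subtreeAt? q).isSome) (p : Pos) :
    (t.replaceAt q s).subtreeAt? (q ++ p) = s.subtreeAt? p := by
  induction q generalizing t with
  | nil => simp
  | cons i q ih =>
    cases t with
    | leaf => simp at hq
    | node a b c =>
      fin_cases i <;> simp_all <;> exact ih _ hq

theorem subtreeAt?_replaceAt_of_incomp (t s : TTree) (q p : Pos)
    (h1 : ¬ q <+: p) (h2 : ¬ p <+: q) :
    (t.replaceAt q s).subtreeAt? p = t.subtreeAt? p := by
  induction q generalizing p t with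
  | nil => exact absurd (List.nil_prefix) h1
  | cons i q ih =>
    cases p with
    | nil => exact absurd (List.nil_prefix) h2
    | cons j p =>
      cases t with
      | leaf => simp
      | node a b c =>
        by_cases hij : i = j
        · subst hij
          have h1' : ¬ q <+: p := fun h => h1 (by simp [List.cons_prefix_cons, h])
          have h2' : ¬ p <+: q := fun h => h2 (by simp [List.cons_prefix_cons, h])
          fin_cases i <;> simp [ih _ _ h1' h2']
        · fin_cases i <;> fin_cases j <;> simp_all

theorem isBranchPos_of_valid_cons (t u : TTree) (p : Pos) (i : Fin 3) (r : Pos)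
    (h : t.subtreeAt? (p ++ i :: r) = some u) : t.IsBranchPos p := by
  rw [subtreeAt?_append] at h
  rcases hw : t.subtreeAt? p with _ | w
  · rw [hw] at h; simp at h
  · cases w with
    | leaf => rw [hw] at h; simp at h
    | node a b c => exact ⟨a, b, c, hw⟩

theorem eq_of_leafPos_prefix {t : TTree} {p p' : Pos} (hl : t.IsLeafPos p)
    (h : (t.subtreeAt? p').isSome) (hpre : p <+: p') : p' = p := by
  obtain ⟨r, rfl⟩ := hpre
  rw [subtreeAt?_append, hl] at h
  cases r with
  | nil => simp
  | cons i r => simp at h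

theorem leaf_incomp {t : TTree} {p p' : Pos} (h1 : t.IsLeafPos p) (h2 : t.IsLeafPos p')
    (hne : p ≠ p') : ¬ p <+: p' ∧ ¬ p' <+: p := by
  constructor
  · intro h
    exact hne (eq_of_leafPos_prefix h1 (by rw [TTree.IsLeafPos] at h2; simp [h2]) h).symm
  · intro h
    exact hne (eq_of_leafPos_prefix h2 (by rw [TTree.IsLeafPos] at h1; simp [h1]) h)

theorem not_isLeafPos_of_isBranchPos {t : TTree} {p : Pos} (h : t.IsBranchPos p) :
    ¬ t.IsLeafPos p := by
  obtain ⟨a, b, c, h⟩ := h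
  intro hl
  rw [TTree.IsLeafPos, h] at hl
  simp at hl

/-- Boolean branch test. -/
def isBranchB (t : TTree) (p : Pos) : Bool :=
  match t.subtreeAt? p with
  | some (.node _ _ _) => true
  | _ => false

theorem isBranchB_iff (t : TTree) (p : Pos) : isBranchB t p = true ↔ t.IsBranchPos p := by
  rw [isBranchB]
  rcases h : t.subtreeAt? p with _ | w
  · simp only [TTree.IsBranchPos, h]; simp
  · cases w with
    | leaf => simp only [TTree.IsBranchPos, h]; simp
    | node a b c => simp only [TTree.IsBranchPos, h]; simp

theorem natParityXor (m n : ℕ) : (((m + n) % 2 == 1) : Bool) = xor (m % 2 == 1) (n % 2 == 1) := by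
  rcases Nat.mod_two_eq_zero_or_one m with h | h <;>
    rcases Nat.mod_two_eq_zero_or_one n with h' | h' <;>
      simp [Nat.add_mod, h, h']

theorem posSign_append (b : Bool) (p r : Pos) :
    posSign b (p ++ r) = xor (posSign b p) (r.count 1 % 2 == 1) := by
  simp only [posSign, List.count_append, natParityXor, Bool.xor_assoc]

theorem posSign_concat (b : Bool) (p : Pos) (i : Fin 3) :
    posSign b (p ++ [i]) = xor (posSign b p) (decide (i = 1)) := by
  rw [posSign_append]
  congr 1
  fin_cases i <;> simp [List.count_cons] <;> rfl

theorem signR_neg {x y : NodeId} (h : posSign y.1 y.2 = !posSign x.1 x.2) :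
    signR y = -signR x := by
  rw [signR, signR, h]
  cases posSign x.1 x.2 <;> simp

/-- The conjunction of conditions on a matching `M` for the couple `Q`. -/
def Good (Q : Couple) (M : NodeId → NodeId) : Prop :=
  (∀ x, Q.IsBranch x → Q.IsBranch (M x)) ∧
  (∀ x, Q.IsBranch x → M (M x) = x) ∧
  (∀ x, Q.IsBranch x → M x ≠ x) ∧
  (∀ x, ¬ Q.IsBranch x → M x = x) ∧
  ∀ (d : ℕ), 1 ≤ d → ∀ L : ℝ, 0 < L → ∀ β : Fin d → ℝ, (∀ j, 0 < β j) →
    ∀ k : NodeId → Fin d → ℝ, IsDecoration Q d L k →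
      ∀ x, Q.IsBranch x →
        signR (M x) * OmegaN d β k (M x) = -(signR x * OmegaN d β k x)

theorem not_isBranchPos_leaf (p : Pos) : ¬ TTree.leaf.IsBranchPos p := by
  rintro ⟨a, b, c, h⟩
  cases p with
  | nil => simp at h
  | cons i r => simp at h

theorem trivial_not_isBranch (x : NodeId) : ¬ trivialCouple.IsBranch x := by
  rw [Couple.IsBranch]
  have : trivialCouple.treeOf x.1 = .leaf := by cases x.1 <;> rfl
  rw [this]
  exact not_isBranchPos_leaf _

theorem good_trivial : ∃! M, Good trivialCouple M := by
  refine ⟨id, ⟨?_, ?_, ?_, ?_, ?_⟩, ?_⟩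
  · intro x hx; exact absurd hx (trivial_not_isBranch x)
  · intro x hx; exact absurd hx (trivial_not_isBranch x)
  · intro x hx; exact absurd hx (trivial_not_isBranch x)
  · intro x _; rfl
  · intro d _ L _ β _ k _ x hx; exact absurd hx (trivial_not_isBranch x)
  · intro M hM
    funext x
    exact hM.2.2.2.1 x (trivial_not_isBranch x)

theorem not_prefix_append_of_incomp {α : Type*} {a b p : List α}
    (h1 : ¬ a <+: b) (h2 : ¬ b <+: a) : ¬ a <+: (b ++ p) := by
  intro h
  rcases le_or_gt a.length b.length with hl | hl
  · exact h1 (List.prefix_of_prefix_length_le h (List.prefix_append b p) hl)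
  · exact h2 (List.prefix_of_prefix_length_le (List.prefix_append b p) h hl.le)

theorem isBranch_isSome {t : TTree} {p : Pos} (h : t.IsBranchPos p) :
    (t.subtreeAt? p).isSome := by
  obtain ⟨a, b, c, h⟩ := h; simp [h]

theorem isLeaf_isSome {t : TTree} {p : Pos} (h : t.IsLeafPos p) :
    (t.subtreeAt? p).isSome := by
  rw [TTree.IsLeafPos] at h; simp [h]

/-- Context for a step A move. -/
structure ACtx (Q Q' : Couple) (l m : NodeId) (σ : Fin 3 → Fin 3) : Prop where
  hl : Q.IsLeaf l
  hm : Q.IsLeaf m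
  hne : m ≠ l
  hpairl : Q.pair l = m
  hpairm : Q.pair m = l
  hsg : posSign m.1 m.2 = !(posSign l.1 l.2)
  hσ : σ = id ∨ σ = swap02
  hpos : Q'.pos = graft2 Q.pos true l m oneTree
  hneg : Q'.neg = graft2 Q.neg false l m oneTree
  hqp : Q'.pair = normalizePair Q'.pos Q'.neg (stepAPairRaw Q.pair l m σ)

namespace ACtx

variable {Q Q' : Couple} {l m : NodeId} {σ : Fin 3 → Fin 3} (h : ACtx Q Q' l m σ)
include h

theorem hne2 : l.2 ≠ m.2 ∨ l.1 ≠ m.1 := by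
  by_cases h1 : l.1 = m.1
  · refine Or.inl fun h2 => h.hne (Prod.ext h1.symm h2.symm)
  · exact Or.inr h1

theorem incomp (hc : m.1 = l.1) : ¬ l.2 <+: m.2 ∧ ¬ m.2 <+: l.2 := by
  have hm' : (Q.treeOf l.1).IsLeafPos m.2 := by
    have := h.hm; rw [Couple.IsLeaf, hc] at this; exact this
  have hne2 : l.2 ≠ m.2 := by
    rcases h.hne2 with h' | h'
    · exact h'
    · exact absurd hc.symm h'
  exact leaf_incomp h.hl hm' hne2

theorem treeOf' (b : Bool) : Q'.treeOf b = graft2 (Q.treeOf b) b l m oneTree := by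
  cases b
  · exact h.hneg
  · exact h.hpos

theorem subtree_new (p : Pos) :
    (Q'.treeOf l.1).subtreeAt? (l.2 ++ p) = oneTree.subtreeAt? p := by
  rw [h.treeOf']
  by_cases hc : m.1 = l.1
  · rw [graft2]
    simp only [if_pos rfl, if_pos hc]
    rw [subtreeAt?_replaceAt_of_incomp _ _ _ _
        (not_prefix_append_of_incomp (h.incomp hc).2 (h.incomp hc).1)
        (fun hh => (h.incomp hc).1 ((List.prefix_append l.2 p).trans hh))]
    exact subtreeAt?_replaceAt_append _ _ _ (isLeaf_isSome h.hl) p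
  · rw [graft2]
    simp only [if_pos rfl, if_neg hc]
    exact subtreeAt?_replaceAt_append _ _ _ (isLeaf_isSome h.hl) p

theorem subtree_new' (p : Pos) :
    (Q'.treeOf m.1).subtreeAt? (m.2 ++ p) = oneTree.subtreeAt? p := by
  rw [h.treeOf']
  by_cases hc : l.1 = m.1
  · rw [graft2]
    simp only [if_pos rfl, if_pos hc]
    have hval : ((Q.treeOf m.1).replaceAt l.2 oneTree).subtreeAt? m.2
        = (Q.treeOf m.1).subtreeAt? m.2 := by
      refine subtreeAt?_replaceAt_of_incomp _ _ _ _ ?_ ?_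
      · exact (h.incomp hc.symm).1
      · exact (h.incomp hc.symm).2
    refine subtreeAt?_replaceAt_append _ _ _ ?_ p
    rw [hval]
    have hm' : (Q.treeOf m.1).IsLeafPos m.2 := h.hm
    exact isLeaf_isSome hm'
  · rw [graft2]
    simp only [if_pos rfl, if_neg hc]
    exact subtreeAt?_replaceAt_append _ _ _ (isLeaf_isSome h.hm) p

theorem subtree_off (x : NodeId)
    (h1 : x.1 = l.1 → ¬ l.2 <+: x.2 ∧ ¬ x.2 <+: l.2)
    (h2 : x.1 = m.1 → ¬ m.2 <+: x.2 ∧ ¬ x.2 <+: m.2) :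
    (Q'.treeOf x.1).subtreeAt? x.2 = (Q.treeOf x.1).subtreeAt? x.2 := by
  rw [h.treeOf']
  by_cases hcl : l.1 = x.1 <;> by_cases hcm : m.1 = x.1
  · simp only [graft2, if_pos hcl, if_pos hcm]
    rw [subtreeAt?_replaceAt_of_incomp _ _ _ _ (h2 hcm.symm).1 (h2 hcm.symm).2,
      subtreeAt?_replaceAt_of_incomp _ _ _ _ (h1 hcl.symm).1 (h1 hcl.symm).2]
  · simp only [graft2, if_pos hcl, if_neg hcm]
    rw [subtreeAt?_replaceAt_of_incomp _ _ _ _ (h1 hcl.symm).1 (h1 hcl.symm).2]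
  · simp only [graft2, if_neg hcl, if_pos hcm]
    rw [subtreeAt?_replaceAt_of_incomp _ _ _ _ (h2 hcm.symm).1 (h2 hcm.symm).2]
  · simp only [graft2, if_neg hcl, if_neg hcm]

end ACtx

theorem isBranchPos_oneTree (r : Pos) : oneTree.IsBranchPos r ↔ r = [] := by
  cases r with
  | nil => simp only [TTree.IsBranchPos, subtreeAt?_nil]; simp [oneTree]
  | cons j r' =>
    simp only [TTree.IsBranchPos]
    constructor
    · rintro ⟨a, b, c, hs⟩
      exfalso
      fin_cases j <;> simp [oneTree] at hs <;> cases r' <;> simp_all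
    · intro hh; simp at hh

theorem isLeafPos_oneTree (r : Pos) : oneTree.IsLeafPos r ↔ ∃ j : Fin 3, r = [j] := by
  cases r with
  | nil =>
    simp only [TTree.IsLeafPos, subtreeAt?_nil]
    simp [oneTree]
  | cons j r' =>
    cases r' with
    | nil =>
      simp only [TTree.IsLeafPos]
      constructor
      · intro _; exact ⟨j, rfl⟩
      · intro _; fin_cases j <;> rfl
    | cons j' r'' =>
      simp only [TTree.IsLeafPos]
      constructor
      · intro hs; exfalso; fin_cases j <;> simp [oneTree] at hs
      · rintro ⟨j'', hj⟩; simp at hj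

theorem childId_ne_self (x : NodeId) (j : Fin 3) : childId x j ≠ x := by
  intro hh
  have := congrArg (fun y : NodeId => y.2.length) hh
  simp [childId] at this

theorem childId_inj {x y : NodeId} {j j' : Fin 3} (hh : childId x j = childId y j') :
    x = y ∧ j = j' := by
  rw [childId, childId, Prod.ext_iff] at hh
  obtain ⟨h1, h2⟩ := hh
  have := List.append_inj' h2 rfl
  simp at this
  exact ⟨Prod.ext h1 this.1, this.2⟩

namespace ACtx

variable {Q Q' : Couple} {l m : NodeId} {σ : Fin 3 → Fin 3} (h : ACtx Q Q' l m σ)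
include h

theorem not_node_child_l (j : Fin 3) : ¬ Q.IsNode (childId l j) := by
  rw [Couple.IsNode, childId]
  have : (Q.treeOf l.1).subtreeAt? (l.2 ++ [j]) = TTree.leaf.subtreeAt? [j] := by
    rw [subtreeAt?_append]
    have hl : (Q.treeOf l.1).subtreeAt? l.2 = some .leaf := h.hl
    rw [hl]; rfl
  simp only [this]
  simp

theorem not_node_child_m (j : Fin 3) : ¬ Q.IsNode (childId m j) := by
  rw [Couple.IsNode, childId]
  have : (Q.treeOf m.1).subtreeAt? (m.2 ++ [j]) = TTree.leaf.subtreeAt? [j] := by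
    rw [subtreeAt?_append]
    have hl : (Q.treeOf m.1).subtreeAt? m.2 = some .leaf := h.hm
    rw [hl]; rfl
  simp only [this]
  simp

theorem subtree_l : (Q'.treeOf l.1).subtreeAt? l.2 = some oneTree := by
  simpa using h.subtree_new []

theorem subtree_m : (Q'.treeOf m.1).subtreeAt? m.2 = some oneTree := by
  simpa using h.subtree_new' []

theorem branch_above_l (x : NodeId) (h1 : x.1 = l.1) (h2 : x.2 <+: l.2) (h3 : x.2 ≠ l.2) :
    Q.IsBranch x ∧ Q'.IsBranch x := by
  obtain ⟨r, hr⟩ := h2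
  match r, h3 with
  | [], h3 => exact absurd (by rw [← hr]; simp) h3
  | j :: r', _ =>
    constructor
    · rw [Couple.IsBranch, h1]
      exact isBranchPos_of_valid_cons _ _ _ j r' (by rw [hr]; exact h.hl)
    · rw [Couple.IsBranch, h1]
      exact isBranchPos_of_valid_cons _ _ _ j r' (by rw [hr]; exact h.subtree_l)

theorem branch_above_m (x : NodeId) (h1 : x.1 = m.1) (h2 : x.2 <+: m.2) (h3 : x.2 ≠ m.2) :
    Q.IsBranch x ∧ Q'.IsBranch x := by
  obtain ⟨r, hr⟩ := h2
  match r, h3 with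
  | [], h3 => exact absurd (by rw [← hr]; simp) h3
  | j :: r', _ =>
    constructor
    · rw [Couple.IsBranch, h1]
      exact isBranchPos_of_valid_cons _ _ _ j r' (by rw [hr]; exact h.hm)
    · rw [Couple.IsBranch, h1]
      exact isBranchPos_of_valid_cons _ _ _ j r' (by rw [hr]; exact h.subtree_m)

/-- The off-condition for `l` holds whenever `x` is a Q-node incomparable-or-above `l`
but not at or below `l`. -/
theorem off_l (x : NodeId) (hnode : (((Q.treeOf x.1)).subtreeAt? x.2).isSome)
    (hxl : x ≠ l) (hnab : ¬ (x.1 = l.1 ∧ x.2 <+: l.2 ∧ x.2 ≠ l.2)) :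
    x.1 = l.1 → ¬ l.2 <+: x.2 ∧ ¬ x.2 <+: l.2 := by
  intro he
  have hl' : (Q.treeOf x.1).IsLeafPos l.2 := by rw [he]; exact h.hl
  constructor
  · intro hp
    exact hxl (Prod.ext he (eq_of_leafPos_prefix hl' hnode hp))
  · intro hp
    by_cases heq : x.2 = l.2
    · exact hxl (Prod.ext he heq)
    · exact hnab ⟨he, hp, heq⟩

theorem off_m (x : NodeId) (hnode : (((Q.treeOf x.1)).subtreeAt? x.2).isSome)
    (hxm : x ≠ m) (hnab : ¬ (x.1 = m.1 ∧ x.2 <+: m.2 ∧ x.2 ≠ m.2)) :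
    x.1 = m.1 → ¬ m.2 <+: x.2 ∧ ¬ x.2 <+: m.2 := by
  intro he
  have hl' : (Q.treeOf x.1).IsLeafPos m.2 := by rw [he]; exact h.hm
  constructor
  · intro hp
    exact hxm (Prod.ext he (eq_of_leafPos_prefix hl' hnode hp))
  · intro hp
    by_cases heq : x.2 = m.2
    · exact hxm (Prod.ext he heq)
    · exact hnab ⟨he, hp, heq⟩

theorem ne_l_of_isBranch {x : NodeId} (hb : Q.IsBranch x) : x ≠ l := by
  rintro rfl
  exact not_isLeafPos_of_isBranchPos hb h.hl

theorem ne_m_of_isBranch {x : NodeId} (hb : Q.IsBranch x) : x ≠ m := by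
  rintro rfl
  exact not_isLeafPos_of_isBranchPos hb h.hm

theorem isBranch_mono (x : NodeId) (hb : Q.IsBranch x) : Q'.IsBranch x := by
  by_cases hcl : x.1 = l.1 ∧ x.2 <+: l.2 ∧ x.2 ≠ l.2
  · exact (h.branch_above_l x hcl.1 hcl.2.1 hcl.2.2).2
  by_cases hcm : x.1 = m.1 ∧ x.2 <+: m.2 ∧ x.2 ≠ m.2
  · exact (h.branch_above_m x hcm.1 hcm.2.1 hcm.2.2).2
  obtain ⟨a, b, c, hs⟩ := hb
  exact ⟨a, b, c, (h.subtree_off x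
    (h.off_l x (by simp [hs]) (h.ne_l_of_isBranch ⟨a,b,c,hs⟩) hcl)
    (h.off_m x (by simp [hs]) (h.ne_m_of_isBranch ⟨a,b,c,hs⟩) hcm)).trans hs⟩

theorem isBranch_l : Q'.IsBranch l := ⟨.leaf, .leaf, .leaf, h.subtree_l⟩

theorem isBranch_m : Q'.IsBranch m := ⟨.leaf, .leaf, .leaf, h.subtree_m⟩

end ACtx

theorem oneTree_valid_cases (r : Pos) (hv : (oneTree.subtreeAt? r).isSome) :
    r = [] ∨ ∃ j : Fin 3, r = [j] := by
  cases r with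
  | nil => exact Or.inl rfl
  | cons j r' =>
    cases r' with
    | nil => exact Or.inr ⟨j, rfl⟩
    | cons j' r'' => exfalso; fin_cases j <;> simp [oneTree] at hv

theorem isNode_of_isBranch {Q : Couple} {x : NodeId} (hb : Q.IsBranch x) : Q.IsNode x := by
  obtain ⟨a, b, c, hs⟩ := hb
  rw [Couple.IsNode, hs]; rfl

theorem isNode_of_isLeaf {Q : Couple} {x : NodeId} (hb : Q.IsLeaf x) : Q.IsNode x := by
  rw [Couple.IsNode, hb]; rfl

namespace ACtx

variable {Q Q' : Couple} {l m : NodeId} {σ : Fin 3 → Fin 3} (h : ACtx Q Q' l m σ)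
include h

theorem below_l (x : NodeId) (r : Pos) (h1 : x.1 = l.1) (h2 : x.2 = l.2 ++ r) :
    (Q'.treeOf x.1).subtreeAt? x.2 = oneTree.subtreeAt? r := by
  rw [h1, h2]; exact h.subtree_new r

theorem below_m (x : NodeId) (r : Pos) (h1 : x.1 = m.1) (h2 : x.2 = m.2 ++ r) :
    (Q'.treeOf x.1).subtreeAt? x.2 = oneTree.subtreeAt? r := by
  rw [h1, h2]; exact h.subtree_new' r

theorem off_l' (x : NodeId) (hal : ¬ (x.1 = l.1 ∧ l.2 <+: x.2))
    (habl : ¬ (x.1 = l.1 ∧ x.2 <+: l.2 ∧ x.2 ≠ l.2)) :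
    x.1 = l.1 → ¬ l.2 <+: x.2 ∧ ¬ x.2 <+: l.2 := by
  intro he
  refine ⟨fun hp => hal ⟨he, hp⟩, fun hp => ?_⟩
  by_cases heq : x.2 = l.2
  · exact hal ⟨he, heq ▸ List.prefix_refl _⟩
  · exact habl ⟨he, hp, heq⟩

theorem off_m' (x : NodeId) (hal : ¬ (x.1 = m.1 ∧ m.2 <+: x.2))
    (habl : ¬ (x.1 = m.1 ∧ x.2 <+: m.2 ∧ x.2 ≠ m.2)) :
    x.1 = m.1 → ¬ m.2 <+: x.2 ∧ ¬ x.2 <+: m.2 := by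
  intro he
  refine ⟨fun hp => hal ⟨he, hp⟩, fun hp => ?_⟩
  by_cases heq : x.2 = m.2
  · exact hal ⟨he, heq ▸ List.prefix_refl _⟩
  · exact habl ⟨he, hp, heq⟩

theorem isBranch_inv (x : NodeId) (hb : Q'.IsBranch x) (hxl : x ≠ l) (hxm : x ≠ m) :
    Q.IsBranch x := by
  obtain ⟨a, b, c, hs⟩ := hb
  by_cases hal : x.1 = l.1 ∧ l.2 <+: x.2
  · obtain ⟨r, hr⟩ := hal.2
    have hb' : oneTree.IsBranchPos r := ⟨a, b, c, by rw [← h.below_l x r hal.1 hr.symm]; exact hs⟩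
    rw [isBranchPos_oneTree] at hb'
    subst hb'
    exact absurd (Prod.ext hal.1 (by rw [← hr]; simp)) hxl
  by_cases ham : x.1 = m.1 ∧ m.2 <+: x.2
  · obtain ⟨r, hr⟩ := ham.2
    have hb' : oneTree.IsBranchPos r := ⟨a, b, c, by rw [← h.below_m x r ham.1 hr.symm]; exact hs⟩
    rw [isBranchPos_oneTree] at hb'
    subst hb'
    exact absurd (Prod.ext ham.1 (by rw [← hr]; simp)) hxm
  by_cases habl : x.1 = l.1 ∧ x.2 <+: l.2 ∧ x.2 ≠ l.2
  · exact (h.branch_above_l x habl.1 habl.2.1 habl.2.2).1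
  by_cases habm : x.1 = m.1 ∧ x.2 <+: m.2 ∧ x.2 ≠ m.2
  · exact (h.branch_above_m x habm.1 habm.2.1 habm.2.2).1
  · exact ⟨a, b, c, (h.subtree_off x (h.off_l' x hal habl) (h.off_m' x ham habm)).symm.trans hs⟩

theorem isNode_mono (x : NodeId) (hn : Q.IsNode x) : Q'.IsNode x := by
  by_cases hal : x.1 = l.1 ∧ l.2 <+: x.2
  · have hl' : (Q.treeOf x.1).IsLeafPos l.2 := by rw [hal.1]; exact h.hl
    have hx2 : x.2 = l.2 := eq_of_leafPos_prefix hl' hn hal.2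
    rw [Couple.IsNode, h.below_l x [] hal.1 (by rw [hx2]; simp)]
    simp
  by_cases ham : x.1 = m.1 ∧ m.2 <+: x.2
  · have hl' : (Q.treeOf x.1).IsLeafPos m.2 := by rw [ham.1]; exact h.hm
    have hx2 : x.2 = m.2 := eq_of_leafPos_prefix hl' hn ham.2
    rw [Couple.IsNode, h.below_m x [] ham.1 (by rw [hx2]; simp)]
    simp
  by_cases habl : x.1 = l.1 ∧ x.2 <+: l.2 ∧ x.2 ≠ l.2
  · exact isNode_of_isBranch (h.branch_above_l x habl.1 habl.2.1 habl.2.2).2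
  by_cases habm : x.1 = m.1 ∧ x.2 <+: m.2 ∧ x.2 ≠ m.2
  · exact isNode_of_isBranch (h.branch_above_m x habm.1 habm.2.1 habm.2.2).2
  · rw [Couple.IsNode, h.subtree_off x (h.off_l' x hal habl) (h.off_m' x ham habm)]
    exact hn

theorem isNode_inv (x : NodeId) (hn : Q'.IsNode x) :
    Q.IsNode x ∨ ∃ j : Fin 3, x = childId l j ∨ x = childId m j := by
  by_cases hal : x.1 = l.1 ∧ l.2 <+: x.2
  · obtain ⟨r, hr⟩ := hal.2
    rw [Couple.IsNode, h.below_l x r hal.1 hr.symm] at hn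
    rcases oneTree_valid_cases r hn with rfl | ⟨j, rfl⟩
    · left
      have : x = l := Prod.ext hal.1 (by rw [← hr]; simp)
      rw [this]; exact isNode_of_isLeaf h.hl
    · right; exact ⟨j, Or.inl (Prod.ext hal.1 (by rw [← hr]; rfl))⟩
  by_cases ham : x.1 = m.1 ∧ m.2 <+: x.2
  · obtain ⟨r, hr⟩ := ham.2
    rw [Couple.IsNode, h.below_m x r ham.1 hr.symm] at hn
    rcases oneTree_valid_cases r hn with rfl | ⟨j, rfl⟩
    · left
      have : x = m := Prod.ext ham.1 (by rw [← hr]; simp)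
      rw [this]; exact isNode_of_isLeaf h.hm
    · right; exact ⟨j, Or.inr (Prod.ext ham.1 (by rw [← hr]; rfl))⟩
  by_cases habl : x.1 = l.1 ∧ x.2 <+: l.2 ∧ x.2 ≠ l.2
  · exact Or.inl (isNode_of_isBranch (h.branch_above_l x habl.1 habl.2.1 habl.2.2).1)
  by_cases habm : x.1 = m.1 ∧ x.2 <+: m.2 ∧ x.2 ≠ m.2
  · exact Or.inl (isNode_of_isBranch (h.branch_above_m x habm.1 habm.2.1 habm.2.2).1)
  · left
    rw [Couple.IsNode, ← h.subtree_off x (h.off_l' x hal habl) (h.off_m' x ham habm)]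
    exact hn

theorem isLeaf_mono (y : NodeId) (hy : Q.IsLeaf y) (hyl : y ≠ l) (hym : y ≠ m) :
    Q'.IsLeaf y := by
  by_cases hal : y.1 = l.1 ∧ l.2 <+: y.2
  · have hl' : (Q.treeOf y.1).IsLeafPos l.2 := by rw [hal.1]; exact h.hl
    exact absurd (Prod.ext hal.1 (eq_of_leafPos_prefix hl' (isLeaf_isSome hy) hal.2)) hyl
  by_cases ham : y.1 = m.1 ∧ m.2 <+: y.2
  · have hl' : (Q.treeOf y.1).IsLeafPos m.2 := by rw [ham.1]; exact h.hm
    exact absurd (Prod.ext ham.1 (eq_of_leafPos_prefix hl' (isLeaf_isSome hy) ham.2)) hym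
  by_cases habl : y.1 = l.1 ∧ y.2 <+: l.2 ∧ y.2 ≠ l.2
  · exact absurd hy (not_isLeafPos_of_isBranchPos (h.branch_above_l y habl.1 habl.2.1 habl.2.2).1)
  by_cases habm : y.1 = m.1 ∧ y.2 <+: m.2 ∧ y.2 ≠ m.2
  · exact absurd hy (not_isLeafPos_of_isBranchPos (h.branch_above_m y habm.1 habm.2.1 habm.2.2).1)
  · rw [Couple.IsLeaf, TTree.IsLeafPos,
      h.subtree_off y (h.off_l' y hal habl) (h.off_m' y ham habm)]
    exact hy

theorem isLeaf_child_l (j : Fin 3) : Q'.IsLeaf (childId l j) := by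
  rw [Couple.IsLeaf, TTree.IsLeafPos, h.below_l (childId l j) [j] rfl rfl]
  fin_cases j <;> rfl

theorem isLeaf_child_m (j : Fin 3) : Q'.IsLeaf (childId m j) := by
  rw [Couple.IsLeaf, TTree.IsLeafPos, h.below_m (childId m j) [j] rfl rfl]
  fin_cases j <;> rfl

theorem isLeaf_inv (y : NodeId) (hy : Q'.IsLeaf y) :
    (Q.IsLeaf y ∧ y ≠ l ∧ y ≠ m) ∨ ∃ j : Fin 3, y = childId l j ∨ y = childId m j := by
  by_cases hal : y.1 = l.1 ∧ l.2 <+: y.2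
  · obtain ⟨r, hr⟩ := hal.2
    rw [Couple.IsLeaf, TTree.IsLeafPos, h.below_l y r hal.1 hr.symm] at hy
    rcases oneTree_valid_cases r (by simp [hy]) with rfl | ⟨j, rfl⟩
    · exfalso; simp [oneTree] at hy
    · right; exact ⟨j, Or.inl (Prod.ext hal.1 (by rw [← hr]; rfl))⟩
  by_cases ham : y.1 = m.1 ∧ m.2 <+: y.2
  · obtain ⟨r, hr⟩ := ham.2
    rw [Couple.IsLeaf, TTree.IsLeafPos, h.below_m y r ham.1 hr.symm] at hy
    rcases oneTree_valid_cases r (by simp [hy]) with rfl | ⟨j, rfl⟩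
    · exfalso; simp [oneTree] at hy
    · right; exact ⟨j, Or.inr (Prod.ext ham.1 (by rw [← hr]; rfl))⟩
  by_cases habl : y.1 = l.1 ∧ y.2 <+: l.2 ∧ y.2 ≠ l.2
  · exact absurd hy (not_isLeafPos_of_isBranchPos (h.branch_above_l y habl.1 habl.2.1 habl.2.2).2)
  by_cases habm : y.1 = m.1 ∧ y.2 <+: m.2 ∧ y.2 ≠ m.2
  · exact absurd hy (not_isLeafPos_of_isBranchPos (h.branch_above_m y habm.1 habm.2.1 habm.2.2).2)
  · left
    refine ⟨?_, ?_, ?_⟩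
    · rw [Couple.IsLeaf, TTree.IsLeafPos,
        ← h.subtree_off y (h.off_l' y hal habl) (h.off_m' y ham habm)]
      exact hy
    · rintro rfl; exact hal ⟨rfl, List.prefix_refl _⟩
    · rintro rfl; exact ham ⟨rfl, List.prefix_refl _⟩

end ACtx

theorem signR_ne_zero (x : NodeId) : signR x ≠ 0 := by
  rw [signR]; split_ifs <;> norm_num

theorem child_isNode {Q : Couple} {x : NodeId} (hb : Q.IsBranch x) (j : Fin 3) :
    Q.IsNode (childId x j) := by
  obtain ⟨a, b, c, hs⟩ := hb
  rw [Couple.IsNode, childId]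
  show ((Q.treeOf x.1).subtreeAt? (x.2 ++ [j])).isSome
  rw [subtreeAt?_append, hs]
  fin_cases j <;> simp

theorem omega_agree {Q : Couple} {d : ℕ} {β : Fin d → ℝ} {k k' : NodeId → Fin d → ℝ}
    {z : NodeId} (hz : Q.IsBranch z) (hag : ∀ x, Q.IsNode x → k' x = k x) :
    OmegaN d β k' z = OmegaN d β k z := by
  rw [OmegaN, OmegaN, hag z (isNode_of_isBranch hz), hag _ (child_isNode hz 0),
    hag _ (child_isNode hz 1), hag _ (child_isNode hz 2)]

namespace ACtx

variable {Q Q' : Couple} {l m : NodeId} {σ : Fin 3 → Fin 3} (h : ACtx Q Q' l m σ)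
include h

theorem pair_eq_raw (x : NodeId) (hx : Q'.IsLeaf x) :
    Q'.pair x = stepAPairRaw Q.pair l m σ x := by
  rw [h.hqp, normalizePair]
  exact if_pos hx

theorem childId_m_ne_l (j j' : Fin 3) : childId m j ≠ childId l j' := by
  intro hh
  exact h.hne (childId_inj hh).1

theorem pair_child_l (j : Fin 3) : Q'.pair (childId l j) = childId m (σ j) := by
  rw [h.pair_eq_raw _ (h.isLeaf_child_l j)]
  have hne01 : (2:Fin 3) ≠ 0 := by decide
  rcases h.hσ with rfl | rfl <;> fin_cases j <;>
    simp [stepAPairRaw, childId, swap02]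

theorem pair_child_m (j : Fin 3) : Q'.pair (childId m j) = childId l (σ j) := by
  rw [h.pair_eq_raw _ (h.isLeaf_child_m j)]
  have h0 : ∀ j', (childId m j : NodeId) ≠ (l.1, l.2 ++ [j']) := fun j' => h.childId_m_ne_l j j'
  rcases h.hσ with rfl | rfl <;> fin_cases j <;>
    simp only [stepAPairRaw, if_neg (h0 0), if_neg (h0 1), if_neg (h0 2)] <;>
    simp [childId, swap02]

theorem not_child_l_of_node {y : NodeId} (hy : Q.IsNode y) (j : Fin 3) :
    y ≠ (l.1, l.2 ++ [j]) := fun hh => h.not_node_child_l j (by rw [childId, ← hh]; exact hy)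

theorem not_child_m_of_node {y : NodeId} (hy : Q.IsNode y) (j : Fin 3) :
    y ≠ (m.1, m.2 ++ [j]) := fun hh => h.not_node_child_m j (by rw [childId, ← hh]; exact hy)

theorem pair_old (y : NodeId) (hy : Q.IsLeaf y) (hyl : y ≠ l) (hym : y ≠ m) :
    Q'.pair y = Q.pair y := by
  rw [h.pair_eq_raw _ (h.isLeaf_mono y hy hyl hym), stepAPairRaw]
  have hn := isNode_of_isLeaf hy
  rw [if_neg (h.not_child_l_of_node hn 0), if_neg (h.not_child_l_of_node hn 1),
    if_neg (h.not_child_l_of_node hn 2), if_neg (h.not_child_m_of_node hn (σ 0)),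
    if_neg (h.not_child_m_of_node hn (σ 1)), if_neg (h.not_child_m_of_node hn (σ 2))]

end ACtx

@[simp] theorem swap02_0 : swap02 0 = 2 := by decide
@[simp] theorem swap02_1 : swap02 1 = 1 := by decide
@[simp] theorem swap02_2 : swap02 2 = 0 := by decide

namespace ACtx

variable {Q Q' : Couple} {l m : NodeId} {σ : Fin 3 → Fin 3} (h : ACtx Q Q' l m σ)
include h

theorem km_eq_kl {d : ℕ} {L : ℝ} {k : NodeId → Fin d → ℝ} (hk : IsDecoration Q' d L k) :
    k m = k l := by
  have hp : ∀ jj : Fin 3, k (childId m (σ jj)) = k (childId l jj) := fun jj => by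
    rw [← h.pair_child_l jj]
    exact hk.2.2 _ (h.isLeaf_child_l jj)
  funext j
  have hbl := hk.2.1 l h.isBranch_l j
  have hbm := hk.2.1 m h.isBranch_m j
  rcases h.hσ with rfl | rfl
  · have e0 := congrFun (hp 0) j
    have e1 := congrFun (hp 1) j
    have e2 := congrFun (hp 2) j
    simp only [id] at e0 e1 e2
    rw [hbl, hbm, e0, e1, e2]
  · have e0 := congrFun (hp 0) j
    have e1 := congrFun (hp 1) j
    have e2 := congrFun (hp 2) j
    simp only [swap02_0, swap02_1, swap02_2] at e0 e1 e2
    rw [hbl, hbm, e0, e1, e2]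
    ring

theorem omega_m_eq {d : ℕ} {L : ℝ} {β : Fin d → ℝ} {k : NodeId → Fin d → ℝ}
    (hk : IsDecoration Q' d L k) : OmegaN d β k m = OmegaN d β k l := by
  have hp : ∀ jj : Fin 3, k (childId m (σ jj)) = k (childId l jj) := fun jj => by
    rw [← h.pair_child_l jj]
    exact hk.2.2 _ (h.isLeaf_child_l jj)
  rw [OmegaN, OmegaN, h.km_eq_kl hk]
  rcases h.hσ with rfl | rfl
  · have e0 := hp 0
    have e1 := hp 1
    have e2 := hp 2
    simp only [id] at e0 e1 e2
    rw [e0, e1, e2]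
  · have e0 := hp 0
    have e1 := hp 1
    have e2 := hp 2
    simp only [swap02_0, swap02_1, swap02_2] at e0 e1 e2
    rw [e0, e1, e2]
    ring

theorem decor_restrict {d : ℕ} {L : ℝ} {k : NodeId → Fin d → ℝ}
    (hk : IsDecoration Q' d L k) : IsDecoration Q d L k := by
  refine ⟨fun x hx j => hk.1 x (h.isNode_mono x hx) j,
    fun x hx j => hk.2.1 x (h.isBranch_mono x hx) j, fun y hy => ?_⟩
  by_cases hyl : y = l
  · subst hyl
    rw [h.hpairl]
    exact h.km_eq_kl hk
  by_cases hym : y = m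
  · subst hym
    rw [h.hpairm]
    exact (h.km_eq_kl hk).symm
  · rw [← h.pair_old y hy hyl hym]
    exact hk.2.2 y (h.isLeaf_mono y hy hyl hym)

theorem decor_extend {d : ℕ} {L : ℝ} {k : NodeId → Fin d → ℝ}
    (hk : IsDecoration Q d L k) :
    ∃ k' : NodeId → Fin d → ℝ, IsDecoration Q' d L k' ∧ ∀ x, Q.IsNode x → k' x = k x := by
  classical
  set k' : NodeId → Fin d → ℝ :=
    fun x => if (∃ j : Fin 3, x = childId l j ∨ x = childId m j) then k l else k x with hk'def
  have hagree : ∀ x, Q.IsNode x → k' x = k x := by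
    intro x hx
    rw [hk'def]
    dsimp only
    rw [if_neg]
    rintro ⟨j, hj | hj⟩
    · exact h.not_node_child_l j (by rw [← hj]; exact hx)
    · exact h.not_node_child_m j (by rw [← hj]; exact hx)
  have hnew_l : ∀ j : Fin 3, k' (childId l j) = k l := by
    intro j; rw [hk'def]; dsimp only; rw [if_pos ⟨j, Or.inl rfl⟩]
  have hnew_m : ∀ j : Fin 3, k' (childId m j) = k l := by
    intro j; rw [hk'def]; dsimp only; rw [if_pos ⟨j, Or.inr rfl⟩]
  have hkm : k m = k l := by rw [← h.hpairl]; exact hk.2.2 l h.hl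
  refine ⟨k', ⟨?_, ?_, ?_⟩, hagree⟩
  · intro x hx j
    rcases h.isNode_inv x hx with hn | ⟨j', hj' | hj'⟩
    · rw [congrFun (hagree x hn) j]
      exact hk.1 x hn j
    · rw [hj', congrFun (hnew_l j') j]
      exact hk.1 l (isNode_of_isLeaf h.hl) j
    · rw [hj', congrFun (hnew_m j') j]
      exact hk.1 l (isNode_of_isLeaf h.hl) j
  · intro x hx j
    by_cases hxl : x = l
    · rw [hxl, congrFun (hagree l (isNode_of_isLeaf h.hl)) j, congrFun (hnew_l 0) j,
        congrFun (hnew_l 1) j, congrFun (hnew_l 2) j]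
      ring
    by_cases hxm : x = m
    · rw [hxm, congrFun (hagree m (isNode_of_isLeaf h.hm)) j, congrFun (hnew_m 0) j,
        congrFun (hnew_m 1) j, congrFun (hnew_m 2) j, congrFun hkm j]
      ring
    · have hb := h.isBranch_inv x hx hxl hxm
      rw [congrFun (hagree x (isNode_of_isBranch hb)) j,
        congrFun (hagree _ (child_isNode hb 0)) j,
        congrFun (hagree _ (child_isNode hb 1)) j,
        congrFun (hagree _ (child_isNode hb 2)) j]
      exact hk.2.1 x hb j
  · intro y hy
    rcases h.isLeaf_inv y hy with ⟨hyQ, hyl, hym⟩ | ⟨j, hj | hj⟩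
    · rw [h.pair_old y hyQ hyl hym, hagree y (isNode_of_isLeaf hyQ),
        hagree (Q.pair y) (isNode_of_isLeaf (Q.pair_leaf y hyQ))]
      exact hk.2.2 y hyQ
    · rw [hj, h.pair_child_l j, hnew_m (σ j), hnew_l j]
    · rw [hj, h.pair_child_m j, hnew_l (σ j), hnew_m j]

end ACtx

namespace ACtx

variable {Q Q' : Couple} {l m : NodeId} {σ : Fin 3 → Fin 3} (h : ACtx Q Q' l m σ)
include h

theorem special : ∃ k : NodeId → Fin 1 → ℝ, IsDecoration Q' 1 1 k ∧
    (∀ x, Q.IsBranch x → OmegaN 1 (fun _ => 1) k x = 0) ∧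
    OmegaN 1 (fun _ => 1) k l ≠ 0 := by
  classical
  set k : NodeId → Fin 1 → ℝ := fun x => if x = childId l 1 ∨ x = childId m 1 then fun _ => 2
    else if x = childId l 0 ∨ x = childId l 2 ∨ x = childId m 0 ∨ x = childId m 2 then fun _ => 1
    else fun _ => 0 with hkdef
  have hll : ∀ (j j' : Fin 3), j ≠ j' → childId l j ≠ childId l j' :=
    fun j j' hne hh => hne (childId_inj hh).2
  have hmm : ∀ (j j' : Fin 3), j ≠ j' → childId m j ≠ childId m j' :=
    fun j j' hne hh => hne (childId_inj hh).2
  have hlm : ∀ j j' : Fin 3, childId l j ≠ childId m j' :=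
    fun j j' hh => h.hne (childId_inj hh).1.symm
  have vl1 : k (childId l 1) = fun _ => 2 := by
    rw [hkdef]; dsimp only; rw [if_pos (Or.inl rfl)]
  have vm1 : k (childId m 1) = fun _ => 2 := by
    rw [hkdef]; dsimp only; rw [if_pos (Or.inr rfl)]
  have vl0 : k (childId l 0) = fun _ => 1 := by
    rw [hkdef]; dsimp only
    rw [if_neg (by rintro (hh | hh); exacts [hll 0 1 (by decide) hh, hlm 0 1 hh]),
      if_pos (Or.inl rfl)]
  have vl2 : k (childId l 2) = fun _ => 1 := by
    rw [hkdef]; dsimp only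
    rw [if_neg (by rintro (hh | hh); exacts [hll 2 1 (by decide) hh, hlm 2 1 hh]),
      if_pos (Or.inr (Or.inl rfl))]
  have vm0 : k (childId m 0) = fun _ => 1 := by
    rw [hkdef]; dsimp only
    rw [if_neg (by rintro (hh | hh); exacts [h.childId_m_ne_l 0 1 hh, hmm 0 1 (by decide) hh]),
      if_pos (Or.inr (Or.inr (Or.inl rfl)))]
  have vm2 : k (childId m 2) = fun _ => 1 := by
    rw [hkdef]; dsimp only
    rw [if_neg (by rintro (hh | hh); exacts [h.childId_m_ne_l 2 1 hh, hmm 2 1 (by decide) hh]),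
      if_pos (Or.inr (Or.inr (Or.inr rfl)))]
  have vnode : ∀ x, Q.IsNode x → k x = fun _ => 0 := by
    intro x hx
    rw [hkdef]; dsimp only
    rw [if_neg, if_neg]
    · rintro (hh | hh | hh | hh)
      · exact h.not_node_child_l 0 (by rw [← hh]; exact hx)
      · exact h.not_node_child_l 2 (by rw [← hh]; exact hx)
      · exact h.not_node_child_m 0 (by rw [← hh]; exact hx)
      · exact h.not_node_child_m 2 (by rw [← hh]; exact hx)
    · rintro (hh | hh)
      · exact h.not_node_child_l 1 (by rw [← hh]; exact hx)
      · exact h.not_node_child_m 1 (by rw [← hh]; exact hx)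
  have ns : ∀ c : ℝ, normSqB 1 (fun _ => 1) (fun _ => c) = c ^ 2 := by
    intro c; rw [normSqB]; simp
  refine ⟨k, ⟨?_, ?_, ?_⟩, ?_, ?_⟩
  · intro x _ j
    rw [hkdef]; dsimp only
    split_ifs
    · exact ⟨2, by norm_num⟩
    · exact ⟨1, by norm_num⟩
    · exact ⟨0, by norm_num⟩
  · intro x hx j
    by_cases hxl : x = l
    · rw [hxl, congrFun (vnode l (isNode_of_isLeaf h.hl)) j, congrFun vl0 j,
        congrFun vl1 j, congrFun vl2 j]
      norm_num
    by_cases hxm : x = m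
    · rw [hxm, congrFun (vnode m (isNode_of_isLeaf h.hm)) j, congrFun vm0 j,
        congrFun vm1 j, congrFun vm2 j]
      norm_num
    · have hb := h.isBranch_inv x hx hxl hxm
      rw [congrFun (vnode x (isNode_of_isBranch hb)) j,
        congrFun (vnode _ (child_isNode hb 0)) j,
        congrFun (vnode _ (child_isNode hb 1)) j,
        congrFun (vnode _ (child_isNode hb 2)) j]
      norm_num
  · intro y hy
    have hval : ∀ j : Fin 3, k (childId l j) = k (childId m j) := by
      intro j
      fin_cases j
      · show k (childId l 0) = k (childId m 0); rw [vl0, vm0]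
      · show k (childId l 1) = k (childId m 1); rw [vl1, vm1]
      · show k (childId l 2) = k (childId m 2); rw [vl2, vm2]
    have hσval : ∀ j : Fin 3, k (childId l (σ j)) = k (childId l j) := by
      intro j
      rcases h.hσ with rfl | rfl
      · rfl
      · fin_cases j
        · show k (childId l 2) = k (childId l 0); rw [vl2, vl0]
        · show k (childId l 1) = k (childId l 1); rfl
        · show k (childId l 0) = k (childId l 2); rw [vl0, vl2]
    rcases h.isLeaf_inv y hy with ⟨hyQ, hyl, hym⟩ | ⟨j, hj | hj⟩
    · rw [h.pair_old y hyQ hyl hym, vnode y (isNode_of_isLeaf hyQ),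
        vnode (Q.pair y) (isNode_of_isLeaf (Q.pair_leaf y hyQ))]
    · rw [hj, h.pair_child_l j]
      exact ((hval (σ j)).symm).trans (hσval j)
    · rw [hj, h.pair_child_m j]
      exact (hσval j).trans (hval j)
  · intro x hx
    rw [OmegaN, vnode x (isNode_of_isBranch hx), vnode _ (child_isNode hx 0),
      vnode _ (child_isNode hx 1), vnode _ (child_isNode hx 2)]
    simp only [ns]
    norm_num
  · rw [OmegaN, vnode l (isNode_of_isLeaf h.hl), vl0, vl1, vl2]
    simp only [ns]
    norm_num

end ACtx

theorem stepA_good {Q Q' : Couple} (hA : StepA Q Q') (ih : ∃! M, Good Q M) :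
    ∃! M, Good Q' M := by
  classical
  obtain ⟨l, σ, hleaf, hσ, hpos, hneg, hqp⟩ := hA
  have h : ACtx Q Q' l (Q.pair l) σ :=
    ⟨hleaf, Q.pair_leaf l hleaf, Q.pair_ne l hleaf, rfl, Q.pair_invol l hleaf,
      Q.pair_sign l hleaf, hσ, hpos, hneg, hqp⟩
  obtain ⟨M, hM, hMuniq⟩ := ih
  set M' : NodeId → NodeId :=
    fun x => if x = l then Q.pair l else if x = Q.pair l then l else M x with hM'def
  have hM'l : M' l = Q.pair l := by rw [hM'def]; dsimp only; rw [if_pos rfl]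
  have hM'm : M' (Q.pair l) = l := by
    rw [hM'def]; dsimp only; rw [if_neg h.hne, if_pos rfl]
  have hM'old : ∀ x, x ≠ l → x ≠ Q.pair l → M' x = M x := by
    intro x h1 h2; rw [hM'def]; dsimp only; rw [if_neg h1, if_neg h2]
  have hGood : Good Q' M' := by
    refine ⟨?_, ?_, ?_, ?_, ?_⟩
    · intro x hx
      by_cases hxl : x = l
      · rw [hxl, hM'l]; exact h.isBranch_m
      by_cases hxm : x = Q.pair l
      · rw [hxm, hM'm]; exact h.isBranch_l
      · rw [hM'old x hxl hxm]
        exact h.isBranch_mono _ (hM.1 x (h.isBranch_inv x hx hxl hxm))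
    · intro x hx
      by_cases hxl : x = l
      · rw [hxl, hM'l, hM'm]
      by_cases hxm : x = Q.pair l
      · rw [hxm, hM'm, hM'l]
      · have hxQ := h.isBranch_inv x hx hxl hxm
        have hMx := hM.1 x hxQ
        rw [hM'old x hxl hxm, hM'old (M x) (h.ne_l_of_isBranch hMx) (h.ne_m_of_isBranch hMx)]
        exact hM.2.1 x hxQ
    · intro x hx
      by_cases hxl : x = l
      · rw [hxl, hM'l]; exact h.hne
      by_cases hxm : x = Q.pair l
      · rw [hxm, hM'm]; exact Ne.symm h.hne
      · rw [hM'old x hxl hxm]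
        exact hM.2.2.1 x (h.isBranch_inv x hx hxl hxm)
    · intro x hnx
      have hxl : x ≠ l := fun hh => hnx (hh ▸ h.isBranch_l)
      have hxm : x ≠ Q.pair l := fun hh => hnx (hh ▸ h.isBranch_m)
      rw [hM'old x hxl hxm]
      exact hM.2.2.2.1 x (fun hxQ => hnx (h.isBranch_mono x hxQ))
    · intro d hd L hL β hβ k hk x hx
      by_cases hxl : x = l
      · rw [hxl, hM'l, signR_neg h.hsg, h.omega_m_eq hk]; ring
      by_cases hxm : x = Q.pair l
      · rw [hxm, hM'm, h.omega_m_eq hk, signR_neg h.hsg]; ring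
      · rw [hM'old x hxl hxm]
        exact hM.2.2.2.2 d hd L hL β hβ k (h.decor_restrict hk) x (h.isBranch_inv x hx hxl hxm)
  refine ⟨M', hGood, ?_⟩
  intro M'' hM''
  have hM''l : M'' l = Q.pair l := by
    by_contra hne'
    have hy := hM''.1 l h.isBranch_l
    have hyl := hM''.2.2.1 l h.isBranch_l
    have hyQ := h.isBranch_inv _ hy hyl hne'
    obtain ⟨k0, hdec, hzero, hΩ⟩ := h.special
    have hcond := hM''.2.2.2.2 1 le_rfl 1 one_pos (fun _ => 1) (fun _ => one_pos) k0 hdec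
      l h.isBranch_l
    rw [hzero _ hyQ, mul_zero] at hcond
    exact (mul_ne_zero (signR_ne_zero l) hΩ) (by linarith)
  have hM''m : M'' (Q.pair l) = l := by
    have := hM''.2.1 l h.isBranch_l
    rw [hM''l] at this
    exact this
  have hbr : ∀ z, Q.IsBranch z → Q.IsBranch (M'' z) := by
    intro z hz
    have hz' := h.isBranch_mono z hz
    refine h.isBranch_inv _ (hM''.1 z hz') ?_ ?_
    · intro hh
      have := hM''.2.1 z hz'
      rw [hh, hM''l] at this
      rw [← this] at hz
      exact not_isLeafPos_of_isBranchPos hz h.hm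
    · intro hh
      have := hM''.2.1 z hz'
      rw [hh, hM''m] at this
      rw [← this] at hz
      exact not_isLeafPos_of_isBranchPos hz h.hl
  set M₀ : NodeId → NodeId := fun z => if isBranchB (Q.treeOf z.1) z.2 then M'' z else z
    with hM₀def
  have hM₀b : ∀ z, Q.IsBranch z → M₀ z = M'' z := by
    intro z hz; rw [hM₀def]; dsimp only; rw [if_pos ((isBranchB_iff _ _).mpr hz)]
  have hM₀n : ∀ z, ¬ Q.IsBranch z → M₀ z = z := by
    intro z hz; rw [hM₀def]; dsimp only
    rw [if_neg (fun hh => hz ((isBranchB_iff _ _).mp hh))]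
  have hM₀M : M₀ = M := by
    refine hMuniq M₀ ⟨?_, ?_, ?_, ?_, ?_⟩
    · intro z hz; rw [hM₀b z hz]; exact hbr z hz
    · intro z hz
      rw [hM₀b z hz, hM₀b _ (hbr z hz)]
      exact hM''.2.1 z (h.isBranch_mono z hz)
    · intro z hz; rw [hM₀b z hz]; exact hM''.2.2.1 z (h.isBranch_mono z hz)
    · exact hM₀n
    · intro d hd L hL β hβ k hk z hz
      rw [hM₀b z hz]
      obtain ⟨k', hk', hag⟩ := h.decor_extend hk
      have H5 := hM''.2.2.2.2 d hd L hL β hβ k' hk' z (h.isBranch_mono z hz)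
      rw [omega_agree (hbr z hz) hag, omega_agree hz hag] at H5
      exact H5
  funext x
  by_cases hxl : x = l
  · rw [hxl, hM''l, hM'l]
  by_cases hxm : x = Q.pair l
  · rw [hxm, hM''m, hM'm]
  by_cases hxb : Q'.IsBranch x
  · have hxQ := h.isBranch_inv x hxb hxl hxm
    calc M'' x = M₀ x := (hM₀b x hxQ).symm
    _ = M x := by rw [hM₀M]
    _ = M' x := (hM'old x hxl hxm).symm
  · rw [hM''.2.2.2.1 x hxb, hGood.2.2.2.1 x hxb]

/-! ### Step B infrastructure -/

theorem not_prefix_of_length_lt {a b : Pos} (hh : b.length < a.length) : ¬ a <+: b :=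
  fun hp => absurd hp.length_le (by omega)

theorem drop_q2 (q : Pos) (i lone : Fin 3) (w : Pos) :
    (q ++ i :: lone :: w).drop (q.length + 2) = w := by
  have h1 : q ++ i :: lone :: w = (q ++ [i, lone]) ++ w := by simp
  rw [h1]
  have h2 : (q ++ [i, lone]).length = q.length + 2 := by simp
  rw [← h2, List.drop_left]

theorem prefix_snoc {q z : Pos} {j : Fin 3} (hp : q <+: z ++ [j]) :
    q <+: z ∨ q = z ++ [j] := by
  obtain ⟨t, ht⟩ := hp
  rcases List.eq_nil_or_concat t with rfl | ⟨t', a, rfl⟩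
  · right; rw [← ht]; simp
  · left
    have h3 : (q ++ t') ++ [a] = z ++ [j] := by
      rw [List.append_assoc]; simpa [List.concat_eq_append] using ht
    exact ⟨t', (List.append_inj' h3 rfl).1⟩

theorem miniT_subtree_child (i lone : Fin 3) (S : TTree) (j : Fin 3) (r : Pos) :
    (miniT i lone S).subtreeAt? (j :: r)
      = (if i = j then gchildT lone S else .leaf).subtreeAt? r := by
  fin_cases j <;> simp [miniT]

theorem gchildT_subtree_child (lone : Fin 3) (S : TTree) (j : Fin 3) (r : Pos) :
    (gchildT lone S).subtreeAt? (j :: r) = (if lone = j then S else .leaf).subtreeAt? r := by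
  fin_cases j <;> simp [gchildT]

theorem miniT_subtree_lone (i lone : Fin 3) (S : TTree) (u : Pos) :
    (miniT i lone S).subtreeAt? (i :: lone :: u) = S.subtreeAt? u := by
  rw [miniT_subtree_child, if_pos rfl, gchildT_subtree_child, if_pos rfl]

theorem miniT_classify (i lone : Fin 3) (S : TTree) (r : Pos) (w : TTree)
    (hs : (miniT i lone S).subtreeAt? r = some w) :
    (r = [] ∧ w = miniT i lone S) ∨ (r = [i] ∧ w = gchildT lone S) ∨
    (∃ j, j ≠ i ∧ r = [j] ∧ w = .leaf) ∨ (∃ j, j ≠ lone ∧ r = [i, j] ∧ w = .leaf) ∨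
    (∃ u, r = i :: lone :: u ∧ S.subtreeAt? u = some w) := by
  cases r with
  | nil => left; constructor; rfl; simpa using hs.symm
  | cons j r' =>
    rw [miniT_subtree_child] at hs
    by_cases hij : i = j
    · rw [if_pos hij] at hs
      subst hij
      cases r' with
      | nil =>
        right; left
        exact ⟨rfl, by simpa using hs.symm⟩
      | cons j' u =>
        rw [gchildT_subtree_child] at hs
        by_cases hlj : lone = j'
        · rw [if_pos hlj] at hs
          subst hlj
          right; right; right; right
          exact ⟨u, rfl, hs⟩
        · rw [if_neg hlj] at hs
          cases u with
          | nil =>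
            right; right; right; left
            exact ⟨j', fun hh => hlj hh.symm, rfl, by simpa using hs.symm⟩
          | cons a b => simp at hs
    · rw [if_neg hij] at hs
      cases r' with
      | nil =>
        right; right; left
        exact ⟨j, fun hh => hij hh.symm, rfl, by simpa using hs.symm⟩
      | cons a b => simp at hs

theorem bump_touched (c : Bool) (q : Pos) (i lone : Fin 3) (w : Pos) :
    bump c q i lone (c, q ++ w) = (c, q ++ i :: lone :: w) := by
  rw [bump, if_pos ⟨rfl, ⟨w, rfl⟩⟩]
  simp [List.drop_left]

theorem bump_untouched {c : Bool} {q : Pos} (i lone : Fin 3) {x : NodeId}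
    (hx : ¬ (x.1 = c ∧ q <+: x.2)) : bump c q i lone x = x := by
  rw [bump, if_neg hx]

/-- Inverse of `bump`. -/
def unbumpB (c : Bool) (q : Pos) (i lone : Fin 3) (x : NodeId) : NodeId :=
  if x.1 = c ∧ (q ++ [i, lone]) <+: x.2 then (c, q ++ x.2.drop (q.length + 2)) else x

theorem unbump_bump (c : Bool) (q : Pos) (i lone : Fin 3) (z : NodeId) :
    unbumpB c q i lone (bump c q i lone z) = z := by
  by_cases hz : z.1 = c ∧ q <+: z.2
  · obtain ⟨hz1, w, hw⟩ := hz
    have hzz : z = (c, q ++ w) := Prod.ext hz1 hw.symm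
    rw [hzz, bump_touched, unbumpB,
      if_pos ⟨rfl, ⟨w, by simp⟩⟩, drop_q2]
  · rw [bump_untouched i lone hz, unbumpB, if_neg]
    rintro ⟨h1, hp⟩
    exact hz ⟨h1, (List.prefix_append q [i, lone]).trans hp⟩

theorem bump_ne_n1 (c : Bool) (q : Pos) (i lone : Fin 3) (z : NodeId) :
    bump c q i lone z ≠ (c, q) := by
  by_cases hz : z.1 = c ∧ q <+: z.2
  · obtain ⟨hz1, w, hw⟩ := hz
    have hzz : z = (c, q ++ w) := Prod.ext hz1 hw.symm
    rw [hzz, bump_touched]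
    intro hh
    have := congrArg (fun y : NodeId => y.2.length) hh
    simp at this
  · rw [bump_untouched i lone hz]
    intro hh
    exact hz (by rw [hh]; exact ⟨rfl, List.prefix_refl _⟩)

theorem bump_ne_n2 (c : Bool) (q : Pos) (i lone : Fin 3) (z : NodeId) :
    bump c q i lone z ≠ (c, q ++ [i]) := by
  by_cases hz : z.1 = c ∧ q <+: z.2
  · obtain ⟨hz1, w, hw⟩ := hz
    have hzz : z = (c, q ++ w) := Prod.ext hz1 hw.symm
    rw [hzz, bump_touched]
    intro hh
    have := congrArg (fun y : NodeId => y.2.length) hh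
    simp at this
  · rw [bump_untouched i lone hz]
    intro hh
    exact hz (by rw [hh]; exact ⟨rfl, ⟨[i], rfl⟩⟩)

theorem count_loneIdx (i : Fin 3) (v : Bool) (w : Pos) :
    (i :: loneIdx i v :: w).count 1 % 2 = w.count 1 % 2 := by
  fin_cases i <;> cases v <;> simp [loneIdx, List.count_cons] <;> omega

theorem posSign_bump (c : Bool) (q : Pos) (i : Fin 3) (v : Bool) (z : NodeId) :
    posSign (bump c q i (loneIdx i v) z).1 (bump c q i (loneIdx i v) z).2
      = posSign z.1 z.2 := by
  by_cases hz : z.1 = c ∧ q <+: z.2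
  · obtain ⟨hz1, w, hw⟩ := hz
    have hzz : z = (c, q ++ w) := Prod.ext hz1 hw.symm
    rw [hzz, bump_touched]
    show posSign c (q ++ i :: loneIdx i v :: w) = posSign c (q ++ w)
    rw [posSign_append, posSign_append, count_loneIdx]
  · rw [bump_untouched _ _ hz]

theorem signR_bump (c : Bool) (q : Pos) (i : Fin 3) (v : Bool) (z : NodeId) :
    signR (bump c q i (loneIdx i v) z) = signR z := by
  rw [signR, signR, posSign_bump]

/-- Context for a step B move. -/
structure BCtx (Q Q' : Couple) (c : Bool) (q : Pos) (i : Fin 3) (v : Bool) (S : TTree) :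
    Prop where
  hS : (Q.treeOf c).subtreeAt? q = some S
  htc : Q'.treeOf c = (Q.treeOf c).replaceAt q (miniT i (loneIdx i v) S)
  htn : Q'.treeOf (!c) = Q.treeOf (!c)
  hqp : Q'.pair = normalizePair Q'.pos Q'.neg (stepBPairRaw Q.pair c q i v)

namespace BCtx

variable {Q Q' : Couple} {c : Bool} {q : Pos} {i : Fin 3} {v : Bool} {S : TTree}
  (h : BCtx Q Q' c q i v S)
include h

theorem treeOf_other (b : Bool) (hb : b ≠ c) : Q'.treeOf b = Q.treeOf b := by
  have hbc : b = !c := by cases b <;> cases c <;> simp_all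
  rw [hbc]; exact h.htn

theorem subtree_below (r : Pos) :
    (Q'.treeOf c).subtreeAt? (q ++ r) = (miniT i (loneIdx i v) S).subtreeAt? r := by
  rw [h.htc]; exact subtreeAt?_replaceAt_append _ _ _ (by simp [h.hS]) r

theorem subtree_q_below (u : Pos) :
    (Q.treeOf c).subtreeAt? (q ++ u) = S.subtreeAt? u := by
  rw [subtreeAt?_append, h.hS]
  rfl

theorem subtree_n1 : (Q'.treeOf c).subtreeAt? q = some (miniT i (loneIdx i v) S) := by
  simpa using h.subtree_below []

theorem subtree_off (x : NodeId) (hx : x.1 = c → ¬ q <+: x.2 ∧ ¬ x.2 <+: q) :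
    (Q'.treeOf x.1).subtreeAt? x.2 = (Q.treeOf x.1).subtreeAt? x.2 := by
  by_cases hc : x.1 = c
  · rw [hc, h.htc]
    exact subtreeAt?_replaceAt_of_incomp _ _ _ _ (hx hc).1 (hx hc).2
  · rw [h.treeOf_other x.1 hc]

theorem isBranch_n1 : Q'.IsBranch ((c, q) : NodeId) :=
  ⟨_, _, _, by rw [show ((c,q) : NodeId).2 = q from rfl, h.subtree_n1]; rfl⟩

theorem isBranch_n2 : Q'.IsBranch ((c, q ++ [i]) : NodeId) :=
  ⟨_, _, _, by
    show (Q'.treeOf c).subtreeAt? (q ++ [i]) = _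
    rw [h.subtree_below [i], miniT_subtree_child, if_pos rfl]
    rfl⟩

theorem branch_above (x : NodeId) (h1 : x.1 = c) (h2 : x.2 <+: q) (h3 : x.2 ≠ q) :
    Q.IsBranch x ∧ Q'.IsBranch x := by
  obtain ⟨r, hr⟩ := h2
  match r, h3 with
  | [], h3 => exact absurd (by rw [← hr]; simp) h3
  | j :: r', _ =>
    constructor
    · rw [Couple.IsBranch, h1]
      exact isBranchPos_of_valid_cons _ _ _ j r' (by rw [hr]; exact h.hS)
    · rw [Couple.IsBranch, h1]
      exact isBranchPos_of_valid_cons _ _ _ j r' (by rw [hr]; exact h.subtree_n1)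

theorem off_cond (x : NodeId) (hal : ¬ (x.1 = c ∧ q <+: x.2))
    (hab : ¬ (x.1 = c ∧ x.2 <+: q ∧ x.2 ≠ q)) :
    x.1 = c → ¬ q <+: x.2 ∧ ¬ x.2 <+: q := by
  intro he
  refine ⟨fun hp => hal ⟨he, hp⟩, fun hp => ?_⟩
  by_cases heq : x.2 = q
  · exact hal ⟨he, heq ▸ List.prefix_refl _⟩
  · exact hab ⟨he, hp, heq⟩

theorem isBranch_bump (z : NodeId) (hz : Q.IsBranch z) :
    Q'.IsBranch (bump c q i (loneIdx i v) z) := by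
  by_cases hz' : z.1 = c ∧ q <+: z.2
  · obtain ⟨hz1, w, hw⟩ := hz'
    have hzz : z = (c, q ++ w) := Prod.ext hz1 hw.symm
    rw [hzz] at hz
    obtain ⟨a, b, c2, hs⟩ := hz
    rw [hzz, bump_touched]
    refine ⟨a, b, c2, ?_⟩
    show (Q'.treeOf c).subtreeAt? (q ++ i :: loneIdx i v :: w) = _
    rw [h.subtree_below, miniT_subtree_lone, ← h.subtree_q_below]
    exact hs
  · rw [bump_untouched _ _ hz']
    by_cases hab : z.1 = c ∧ z.2 <+: q ∧ z.2 ≠ q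
    · exact (h.branch_above z hab.1 hab.2.1 hab.2.2).2
    · obtain ⟨a, b, c', hs⟩ := hz
      exact ⟨a, b, c', (h.subtree_off z (h.off_cond z hz' hab)).trans hs⟩

theorem isBranch_inv (x : NodeId) (hx : Q'.IsBranch x)
    (h1 : x ≠ (c, q)) (h2 : x ≠ (c, q ++ [i])) :
    Q.IsBranch (unbumpB c q i (loneIdx i v) x) ∧
      bump c q i (loneIdx i v) (unbumpB c q i (loneIdx i v) x) = x := by
  by_cases hal : x.1 = c ∧ q <+: x.2
  · obtain ⟨hx1, r, hr⟩ := hal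
    have hxx : x = (c, q ++ r) := Prod.ext hx1 hr.symm
    obtain ⟨a, b, c', hs⟩ := hx
    rw [hxx] at hs
    have hs' : (miniT i (loneIdx i v) S).subtreeAt? r = some (.node a b c') := by
      rw [← h.subtree_below r]; exact hs
    rcases miniT_classify _ _ _ _ _ hs' with ⟨rfl, _⟩ | ⟨rfl, _⟩ |
      ⟨j, hj, rfl, hw⟩ | ⟨j, hj, rfl, hw⟩ | ⟨u, rfl, hu⟩
    · exact absurd (by rw [hxx]; simp) h1
    · exact absurd (by rw [hxx]) h2
    · simp at hw
    · simp at hw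
    · have hunb : unbumpB c q i (loneIdx i v) x = (c, q ++ u) := by
        rw [hxx, unbumpB, if_pos ⟨rfl, ⟨u, by simp⟩⟩]
        simp only [drop_q2]
      refine ⟨?_, ?_⟩
      · rw [hunb]
        exact ⟨a, b, c', by rw [show ((c, q++u) : NodeId).2 = q ++ u from rfl,
          h.subtree_q_below]; exact hu⟩
      · rw [hunb, bump_touched, ← hxx]
  · have hunb : unbumpB c q i (loneIdx i v) x = x := by
      rw [unbumpB, if_neg]
      rintro ⟨hh1, hh2⟩
      exact hal ⟨hh1, (List.prefix_append q [i, loneIdx i v]).trans hh2⟩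
    rw [hunb, bump_untouched _ _ hal]
    refine ⟨?_, rfl⟩
    by_cases hab : x.1 = c ∧ x.2 <+: q ∧ x.2 ≠ q
    · exact (h.branch_above x hab.1 hab.2.1 hab.2.2).1
    · obtain ⟨a, b, c', hs⟩ := hx
      exact ⟨a, b, c', (h.subtree_off x (h.off_cond x hal hab)).symm.trans hs⟩

theorem node_q : Q.IsNode ((c, q) : NodeId) := by
  rw [Couple.IsNode]
  show ((Q.treeOf c).subtreeAt? q).isSome
  simp [h.hS]

theorem isNode_bump (z : NodeId) (hz : Q.IsNode z) :
    Q'.IsNode (bump c q i (loneIdx i v) z) := by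
  by_cases hz' : z.1 = c ∧ q <+: z.2
  · obtain ⟨hz1, w, hw⟩ := hz'
    have hzz : z = (c, q ++ w) := Prod.ext hz1 hw.symm
    rw [hzz, bump_touched, Couple.IsNode]
    show ((Q'.treeOf c).subtreeAt? (q ++ i :: loneIdx i v :: w)).isSome
    rw [h.subtree_below, miniT_subtree_lone, ← h.subtree_q_below]
    rw [hzz, Couple.IsNode] at hz
    exact hz
  · rw [bump_untouched _ _ hz']
    by_cases hab : z.1 = c ∧ z.2 <+: q ∧ z.2 ≠ q
    · exact isNode_of_isBranch (h.branch_above z hab.1 hab.2.1 hab.2.2).2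
    · rw [Couple.IsNode, h.subtree_off z (h.off_cond z hz' hab)]
      exact hz

theorem isNode_inv (x : NodeId) (hx : Q'.IsNode x) :
    Q.IsNode (unbumpB c q i (loneIdx i v) x) ∨
      (x.1 = c ∧ q <+: x.2 ∧ ¬ (q ++ [i, loneIdx i v]) <+: x.2) := by
  by_cases hal : x.1 = c ∧ q <+: x.2
  · obtain ⟨hx1, r, hr⟩ := hal
    have hxx : x = (c, q ++ r) := Prod.ext hx1 hr.symm
    rw [Couple.IsNode, hxx] at hx
    have hx' : ((miniT i (loneIdx i v) S).subtreeAt? r).isSome := by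
      rw [← h.subtree_below r]; exact hx
    obtain ⟨w, hw⟩ := Option.isSome_iff_exists.mp hx'
    rcases miniT_classify _ _ _ _ _ hw with ⟨rfl, _⟩ | ⟨rfl, _⟩ |
      ⟨j, hj, rfl, _⟩ | ⟨j, hj, rfl, _⟩ | ⟨u, rfl, hu⟩
    · right
      refine ⟨hx1, hr ▸ ⟨[], by simp⟩, ?_⟩
      rw [hxx]
      exact not_prefix_of_length_lt (by simp)
    · right
      refine ⟨hx1, hr ▸ ⟨[i], rfl⟩, ?_⟩
      rw [hxx]
      exact not_prefix_of_length_lt (by simp)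
    · right
      refine ⟨hx1, hr ▸ ⟨[j], rfl⟩, ?_⟩
      rw [hxx]
      exact not_prefix_of_length_lt (by simp)
    · right
      refine ⟨hx1, hr ▸ ⟨[i, j], rfl⟩, ?_⟩
      rw [hxx]
      intro hp
      have := hp.eq_of_length (by simp)
      have h2 := List.append_inj' this rfl
      simp at h2
      exact hj h2.symm
    · left
      have hunb : unbumpB c q i (loneIdx i v) x = (c, q ++ u) := by
        rw [hxx, unbumpB, if_pos ⟨rfl, ⟨u, by simp⟩⟩]
        simp only [drop_q2]
      rw [hunb, Couple.IsNode]
      show ((Q.treeOf c).subtreeAt? (q ++ u)).isSome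
      rw [h.subtree_q_below, hu]
      rfl
  · left
    have hunb : unbumpB c q i (loneIdx i v) x = x := by
      rw [unbumpB, if_neg]
      rintro ⟨hh1, hh2⟩
      exact hal ⟨hh1, (List.prefix_append q [i, loneIdx i v]).trans hh2⟩
    rw [hunb]
    by_cases hab : x.1 = c ∧ x.2 <+: q ∧ x.2 ≠ q
    · exact isNode_of_isBranch (h.branch_above x hab.1 hab.2.1 hab.2.2).1
    · rw [Couple.IsNode, ← h.subtree_off x (h.off_cond x hal hab)]
      exact hx

theorem isLeaf_bump (z : NodeId) (hz : Q.IsLeaf z) :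
    Q'.IsLeaf (bump c q i (loneIdx i v) z) := by
  by_cases hz' : z.1 = c ∧ q <+: z.2
  · obtain ⟨hz1, w, hw⟩ := hz'
    have hzz : z = (c, q ++ w) := Prod.ext hz1 hw.symm
    rw [hzz, bump_touched, Couple.IsLeaf, TTree.IsLeafPos]
    show (Q'.treeOf c).subtreeAt? (q ++ i :: loneIdx i v :: w) = some .leaf
    rw [h.subtree_below, miniT_subtree_lone, ← h.subtree_q_below]
    rw [hzz, Couple.IsLeaf, TTree.IsLeafPos] at hz
    exact hz
  · rw [bump_untouched _ _ hz']
    by_cases hab : z.1 = c ∧ z.2 <+: q ∧ z.2 ≠ q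
    · exact absurd hz (not_isLeafPos_of_isBranchPos (h.branch_above z hab.1 hab.2.1 hab.2.2).1)
    · rw [Couple.IsLeaf, TTree.IsLeafPos, h.subtree_off z (h.off_cond z hz' hab)]
      exact hz

theorem isLeaf_mini (r : Pos) (hr : (miniT i (loneIdx i v) S).subtreeAt? r = some .leaf) :
    Q'.IsLeaf ((c, q ++ r) : NodeId) := by
  rw [Couple.IsLeaf, TTree.IsLeafPos]
  show (Q'.treeOf c).subtreeAt? (q ++ r) = some .leaf
  rw [h.subtree_below]
  exact hr

theorem isLeaf_inv (y : NodeId) (hy : Q'.IsLeaf y) :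
    (∃ z, Q.IsLeaf z ∧ y = bump c q i (loneIdx i v) z) ∨
      (y.1 = c ∧ ∃ r, y.2 = q ++ r ∧
        ((∃ j, j ≠ i ∧ r = [j]) ∨ (∃ j, j ≠ loneIdx i v ∧ r = [i, j]))) := by
  by_cases hal : y.1 = c ∧ q <+: y.2
  · obtain ⟨hy1, r, hr⟩ := hal
    have hyy : y = (c, q ++ r) := Prod.ext hy1 hr.symm
    rw [hyy, Couple.IsLeaf, TTree.IsLeafPos] at hy
    have hy' : (miniT i (loneIdx i v) S).subtreeAt? r = some .leaf := by
      rw [← h.subtree_below r]; exact hy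
    rcases miniT_classify _ _ _ _ _ hy' with ⟨rfl, hw⟩ | ⟨rfl, hw⟩ |
      ⟨j, hj, rfl, _⟩ | ⟨j, hj, rfl, _⟩ | ⟨u, rfl, hu⟩
    · exact absurd hw.symm (by rw [miniT]; simp)
    · exact absurd hw.symm (by rw [gchildT]; simp)
    · exact Or.inr ⟨hy1, [j], by rw [hyy], Or.inl ⟨j, hj, rfl⟩⟩
    · exact Or.inr ⟨hy1, [i, j], by rw [hyy], Or.inr ⟨j, hj, rfl⟩⟩
    · refine Or.inl ⟨(c, q ++ u), ?_, by rw [hyy, bump_touched]⟩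
      rw [Couple.IsLeaf, TTree.IsLeafPos]
      show (Q.treeOf c).subtreeAt? (q ++ u) = some .leaf
      rw [h.subtree_q_below]
      exact hu
  · refine Or.inl ⟨y, ?_, (bump_untouched _ _ hal).symm⟩
    by_cases hab : y.1 = c ∧ y.2 <+: q ∧ y.2 ≠ q
    · exact absurd hy (not_isLeafPos_of_isBranchPos (h.branch_above y hab.1 hab.2.1 hab.2.2).2)
    · rw [Couple.IsLeaf, TTree.IsLeafPos, ← h.subtree_off y (h.off_cond y hal hab)]
      exact hy

end BCtx

theorem bPairs_ne_11 : (bPairs i v).2.1 ≠ (bPairs i v).1.1 := by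
  fin_cases i <;> cases v <;> decide

theorem bPairs_ne_12 : (bPairs i v).2.1 ≠ (bPairs i v).1.2 := by
  fin_cases i <;> cases v <;> decide

theorem lone_cons_ne_bPairs (i : Fin 3) (v : Bool) (w : Pos) :
    (i :: loneIdx i v :: w) ≠ (bPairs i v).1.1 ∧ (i :: loneIdx i v :: w) ≠ (bPairs i v).1.2 ∧
    (i :: loneIdx i v :: w) ≠ (bPairs i v).2.1 ∧ (i :: loneIdx i v :: w) ≠ (bPairs i v).2.2 := by
  fin_cases i <;> cases v <;> simp [bPairs, loneIdx]

namespace BCtx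

variable {Q Q' : Couple} {c : Bool} {q : Pos} {i : Fin 3} {v : Bool} {S : TTree}
  (h : BCtx Q Q' c q i v S)
include h

theorem pair_eq_raw (x : NodeId) (hx : Q'.IsLeaf x) :
    Q'.pair x = stepBPairRaw Q.pair c q i v x := by
  rw [h.hqp, normalizePair]
  exact if_pos hx

theorem mini_leaf_11 :
    (miniT i (loneIdx i v) S).subtreeAt? (bPairs i v).1.1 = some .leaf := by
  fin_cases i <;> cases v <;> rfl

theorem mini_leaf_12 :
    (miniT i (loneIdx i v) S).subtreeAt? (bPairs i v).1.2 = some .leaf := by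
  fin_cases i <;> cases v <;> rfl

theorem mini_leaf_21 :
    (miniT i (loneIdx i v) S).subtreeAt? (bPairs i v).2.1 = some .leaf := by
  fin_cases i <;> cases v <;> rfl

theorem mini_leaf_22 :
    (miniT i (loneIdx i v) S).subtreeAt? (bPairs i v).2.2 = some .leaf := by
  fin_cases i <;> cases v <;> rfl

theorem ne_append {a b : Pos} (hab : a ≠ b) : ((c, q ++ a) : NodeId) ≠ (c, q ++ b) :=
  fun hh => hab (by simpa using hh)

theorem pair_new1 :
    Q'.pair (c, q ++ (bPairs i v).1.1) = (c, q ++ (bPairs i v).1.2) := by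
  rw [h.pair_eq_raw _ (h.isLeaf_mini _ h.mini_leaf_11), stepBPairRaw]
  rw [if_pos rfl]

theorem pair_new2 :
    Q'.pair (c, q ++ (bPairs i v).2.1) = (c, q ++ (bPairs i v).2.2) := by
  rw [h.pair_eq_raw _ (h.isLeaf_mini _ h.mini_leaf_21), stepBPairRaw]
  rw [if_neg (h.ne_append bPairs_ne_11), if_neg (h.ne_append bPairs_ne_12), if_pos rfl]

theorem pair_bump (z : NodeId) (hz : Q.IsLeaf z) :
    Q'.pair (bump c q i (loneIdx i v) z) = bump c q i (loneIdx i v) (Q.pair z) := by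
  have hlf := h.isLeaf_bump z hz
  rw [h.pair_eq_raw _ hlf, stepBPairRaw]
  by_cases hz' : z.1 = c ∧ q <+: z.2
  · obtain ⟨hz1, w, hw⟩ := hz'
    have hzz : z = (c, q ++ w) := Prod.ext hz1 hw.symm
    rw [hzz, bump_touched]
    rw [if_neg (h.ne_append (lone_cons_ne_bPairs i v w).1),
      if_neg (h.ne_append (lone_cons_ne_bPairs i v w).2.1),
      if_neg (h.ne_append (lone_cons_ne_bPairs i v w).2.2.1),
      if_neg (h.ne_append (lone_cons_ne_bPairs i v w).2.2.2),
      if_pos ⟨rfl, by exact ⟨w, by simp⟩⟩]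
    show bump c q i (loneIdx i v) (Q.pair (c, q ++ (q ++ i :: loneIdx i v :: w).drop
      (q.length + 2))) = _
    rw [drop_q2, ← hzz]
  · have hbz : bump c q i (loneIdx i v) z = z := bump_untouched _ _ hz'
    rw [hbz]
    have hznew : ∀ (P : Pos), z ≠ (c, q ++ P) :=
      fun P hh => hz' (by rw [hh]; exact ⟨rfl, ⟨P, rfl⟩⟩)
    rw [if_neg (hznew _), if_neg (hznew _), if_neg (hznew _), if_neg (hznew _), if_neg]
    rintro ⟨h1, h2⟩
    exact hz' ⟨h1, (List.prefix_append q [i, loneIdx i v]).trans h2⟩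

end BCtx

@[simp] theorem bPairs_0t : bPairs 0 true = (([2], [0,1]), ([1], [0,2])) := by decide
@[simp] theorem bPairs_0f : bPairs 0 false = (([2], [0,1]), ([1], [0,0])) := by decide
@[simp] theorem bPairs_1t : bPairs 1 true = (([0], [1,2]), ([2], [1,0])) := by decide
@[simp] theorem bPairs_1f : bPairs 1 false = (([0], [1,0]), ([2], [1,2])) := by decide
@[simp] theorem bPairs_2t : bPairs 2 true = (([0], [2,1]), ([1], [2,2])) := by decide
@[simp] theorem bPairs_2f : bPairs 2 false = (([0], [2,1]), ([1], [2,0])) := by decide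
@[simp] theorem loneIdx_0t : loneIdx 0 true = 0 := by decide
@[simp] theorem loneIdx_0f : loneIdx 0 false = 2 := by decide
@[simp] theorem loneIdx_1t : loneIdx 1 true = 1 := by decide
@[simp] theorem loneIdx_1f : loneIdx 1 false = 1 := by decide
@[simp] theorem loneIdx_2t : loneIdx 2 true = 0 := by decide
@[simp] theorem loneIdx_2f : loneIdx 2 false = 2 := by decide

theorem fin3_cases (i : Fin 3) : i = 0 ∨ i = 1 ∨ i = 2 := by fin_cases i <;> decide

namespace BCtx

variable {Q Q' : Couple} {c : Bool} {q : Pos} {i : Fin 3} {v : Bool} {S : TTree}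
  (h : BCtx Q Q' c q i v S)
include h

theorem lone_value {d : ℕ} {L : ℝ} {k : NodeId → Fin d → ℝ}
    (hk : IsDecoration Q' d L k) :
    k (c, q ++ [i, loneIdx i v]) = k (c, q) := by
  have hb1 : ∀ jc, k (c, q) jc
      = k (c, q ++ [0]) jc - k (c, q ++ [1]) jc + k (c, q ++ [2]) jc :=
    fun jc => hk.2.1 _ h.isBranch_n1 jc
  have e : ∀ (a j : Fin 3), childId ((c, q ++ [a]) : NodeId) j = (c, q ++ [a, j]) :=
    fun a j => by simp [childId]
  have hb2 : ∀ jc, k (c, q ++ [i]) jc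
      = k (c, q ++ [i, 0]) jc - k (c, q ++ [i, 1]) jc + k (c, q ++ [i, 2]) jc := by
    intro jc
    have := hk.2.1 _ h.isBranch_n2 jc
    rw [e i 0, e i 1, e i 2] at this
    exact this
  have hp1 : k (c, q ++ (bPairs i v).1.2) = k (c, q ++ (bPairs i v).1.1) := by
    rw [← h.pair_new1]
    exact hk.2.2 _ (h.isLeaf_mini _ h.mini_leaf_11)
  have hp2 : k (c, q ++ (bPairs i v).2.2) = k (c, q ++ (bPairs i v).2.1) := by
    rw [← h.pair_new2]
    exact hk.2.2 _ (h.isLeaf_mini _ h.mini_leaf_21)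
  rcases fin3_cases i with rfl | rfl | rfl <;> cases v <;>
    simp only [bPairs_0t, bPairs_0f, bPairs_1t, bPairs_1f, bPairs_2t, bPairs_2f,
      loneIdx_0t, loneIdx_0f, loneIdx_1t, loneIdx_1f, loneIdx_2t, loneIdx_2f] at hp1 hp2 ⊢ <;>
    (funext jc; linarith [hb1 jc, hb2 jc, congrFun hp1 jc, congrFun hp2 jc])

theorem omega_rel {d : ℕ} {L : ℝ} {k : NodeId → Fin d → ℝ} (hk : IsDecoration Q' d L k)
    (β : Fin d → ℝ) :
    signR ((c, q ++ [i]) : NodeId) * OmegaN d β k (c, q ++ [i])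
      = -(signR ((c, q) : NodeId) * OmegaN d β k (c, q)) := by
  have hlone := h.lone_value hk
  have e : ∀ (a j : Fin 3), childId ((c, q ++ [a]) : NodeId) j = (c, q ++ [a, j]) :=
    fun a j => by simp [childId]
  have hp1 : k (c, q ++ (bPairs i v).1.2) = k (c, q ++ (bPairs i v).1.1) := by
    rw [← h.pair_new1]
    exact hk.2.2 _ (h.isLeaf_mini _ h.mini_leaf_11)
  have hp2 : k (c, q ++ (bPairs i v).2.2) = k (c, q ++ (bPairs i v).2.1) := by
    rw [← h.pair_new2]
    exact hk.2.2 _ (h.isLeaf_mini _ h.mini_leaf_21)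
  have hsgn1 : signR ((c, q ++ [(1 : Fin 3)]) : NodeId) = -signR ((c, q) : NodeId) := by
    refine signR_neg ?_
    show posSign c (q ++ [(1 : Fin 3)]) = !posSign c q
    rw [posSign_concat]
    simp
  have hsgn0 : signR ((c, q ++ [(0 : Fin 3)]) : NodeId) = signR ((c, q) : NodeId) := by
    rw [signR, signR]
    have h2 : posSign c (q ++ [(0 : Fin 3)]) = posSign c q := by
      rw [posSign_concat]; simp
    rw [h2]
  have hsgn2 : signR ((c, q ++ [(2 : Fin 3)]) : NodeId) = signR ((c, q) : NodeId) := by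
    rw [signR, signR]
    have h2 : posSign c (q ++ [(2 : Fin 3)]) = posSign c q := by
      rw [posSign_concat]; simp
    rw [h2]
  have e0 : ∀ j : Fin 3, childId ((c, q) : NodeId) j = (c, q ++ [j]) := fun _ => rfl
  rcases fin3_cases i with rfl | rfl | rfl <;> cases v <;>
    simp only [bPairs_0t, bPairs_0f, bPairs_1t, bPairs_1f, bPairs_2t, bPairs_2f,
      loneIdx_0t, loneIdx_0f, loneIdx_1t, loneIdx_1f, loneIdx_2t, loneIdx_2f]
      at hp1 hp2 hlone ⊢ <;>
    (rw [OmegaN, OmegaN]; simp only [e0, e]; rw [hp1, hp2, hlone];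
      first
      | (rw [hsgn1]; ring)
      | (rw [hsgn0]; ring)
      | (rw [hsgn2]; ring))

end BCtx

theorem bPairs_ne_1211 : (bPairs i v).1.2 ≠ (bPairs i v).1.1 := by
  fin_cases i <;> cases v <;> decide

theorem bPairs_ne_2211 : (bPairs i v).2.2 ≠ (bPairs i v).1.1 := by
  fin_cases i <;> cases v <;> decide

theorem bPairs_ne_2212 : (bPairs i v).2.2 ≠ (bPairs i v).1.2 := by
  fin_cases i <;> cases v <;> decide

theorem bPairs_ne_2221 : (bPairs i v).2.2 ≠ (bPairs i v).2.1 := by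
  fin_cases i <;> cases v <;> decide

theorem bPairs_cover (i : Fin 3) (v : Bool) (r : Pos)
    (hr : (∃ j, j ≠ i ∧ r = [j]) ∨ (∃ j, j ≠ loneIdx i v ∧ r = [i, j])) :
    r = (bPairs i v).1.1 ∨ r = (bPairs i v).1.2 ∨ r = (bPairs i v).2.1 ∨
      r = (bPairs i v).2.2 := by
  rcases fin3_cases i with rfl | rfl | rfl <;> cases v <;>
    rcases hr with ⟨j, hj, rfl⟩ | ⟨j, hj, rfl⟩ <;>
    rcases fin3_cases j with rfl | rfl | rfl <;>
    first
    | exact absurd rfl hj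
    | decide

theorem bPairs_facts (i : Fin 3) (v : Bool) :
    ((bPairs i v).1.1.length ≤ 2 ∧ (bPairs i v).1.1 ≠ [i, loneIdx i v]) ∧
    ((bPairs i v).1.2.length ≤ 2 ∧ (bPairs i v).1.2 ≠ [i, loneIdx i v]) ∧
    ((bPairs i v).2.1.length ≤ 2 ∧ (bPairs i v).2.1 ≠ [i, loneIdx i v]) ∧
    ((bPairs i v).2.2.length ≤ 2 ∧ (bPairs i v).2.2 ≠ [i, loneIdx i v]) := by
  fin_cases i <;> cases v <;> decide

namespace BCtx

variable {Q Q' : Couple} {c : Bool} {q : Pos} {i : Fin 3} {v : Bool} {S : TTree}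
  (h : BCtx Q Q' c q i v S)
include h

theorem pair_new1' :
    Q'.pair (c, q ++ (bPairs i v).1.2) = (c, q ++ (bPairs i v).1.1) := by
  rw [h.pair_eq_raw _ (h.isLeaf_mini _ h.mini_leaf_12), stepBPairRaw]
  rw [if_neg (h.ne_append bPairs_ne_1211), if_pos rfl]

theorem pair_new2' :
    Q'.pair (c, q ++ (bPairs i v).2.2) = (c, q ++ (bPairs i v).2.1) := by
  rw [h.pair_eq_raw _ (h.isLeaf_mini _ h.mini_leaf_22), stepBPairRaw]
  rw [if_neg (h.ne_append bPairs_ne_2211), if_neg (h.ne_append bPairs_ne_2212),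
    if_neg (h.ne_append bPairs_ne_2221), if_pos rfl]

theorem k_child_bump {d : ℕ} {L : ℝ} {k : NodeId → Fin d → ℝ}
    (hk : IsDecoration Q' d L k) (z : NodeId) (j : Fin 3) :
    k (bump c q i (loneIdx i v) (childId z j))
      = k (childId (bump c q i (loneIdx i v) z) j) := by
  by_cases hz' : z.1 = c ∧ q <+: z.2
  · obtain ⟨hz1, w, hw⟩ := hz'
    have hzz : z = (c, q ++ w) := Prod.ext hz1 hw.symm
    have hc : childId z j = (c, q ++ (w ++ [j])) := by
      rw [hzz, childId]; simp
    rw [hc, hzz, bump_touched, bump_touched, childId]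
    simp
  · rw [bump_untouched _ _ hz']
    by_cases hcq : childId z j = ((c, q) : NodeId)
    · rw [hcq]
      have : bump c q i (loneIdx i v) ((c, q) : NodeId) = (c, q ++ [i, loneIdx i v]) := by
        have := bump_touched c q i (loneIdx i v) []
        simpa using this
      rw [this]
      exact h.lone_value hk
    · rw [bump_untouched]
      rw [childId]
      rintro ⟨hh1, hh2⟩
      rcases prefix_snoc hh2 with hp | hp
      · exact hz' ⟨hh1, hp⟩
      · exact hcq (Prod.ext hh1.symm hp).symm

theorem decor_restrict {d : ℕ} {L : ℝ} {k : NodeId → Fin d → ℝ}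
    (hk : IsDecoration Q' d L k) :
    IsDecoration Q d L (fun z => k (bump c q i (loneIdx i v) z)) := by
  refine ⟨fun z hz j => hk.1 _ (h.isNode_bump z hz) j, ?_, ?_⟩
  · intro z hz jc
    show k (bump c q i (loneIdx i v) z) jc = _
    have := hk.2.1 _ (h.isBranch_bump z hz) jc
    rw [← h.k_child_bump hk z 0, ← h.k_child_bump hk z 1, ← h.k_child_bump hk z 2] at this
    exact this
  · intro z hz
    show k (bump c q i (loneIdx i v) (Q.pair z)) = k (bump c q i (loneIdx i v) z)
    rw [← h.pair_bump z hz]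
    exact hk.2.2 _ (h.isLeaf_bump z hz)

theorem omega_bump {d : ℕ} {L : ℝ} {k : NodeId → Fin d → ℝ}
    (hk : IsDecoration Q' d L k) (β : Fin d → ℝ) (z : NodeId) :
    OmegaN d β (fun y => k (bump c q i (loneIdx i v) y)) z
      = OmegaN d β k (bump c q i (loneIdx i v) z) := by
  simp only [OmegaN]
  rw [h.k_child_bump hk z 0, h.k_child_bump hk z 1, h.k_child_bump hk z 2]

theorem decor_extend {d : ℕ} {L : ℝ} {k : NodeId → Fin d → ℝ}
    (hk : IsDecoration Q d L k) :
    ∃ k' : NodeId → Fin d → ℝ, IsDecoration Q' d L k' ∧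
      ∀ x, k' (bump c q i (loneIdx i v) x) = k x := by
  classical
  set k' : NodeId → Fin d → ℝ := fun x =>
    if x.1 = c ∧ q <+: x.2 then
      (if (q ++ [i, loneIdx i v]) <+: x.2 then k (c, q ++ x.2.drop (q.length + 2))
        else k (c, q))
    else k x with hk'def
  have hv_node : ∀ x : NodeId, ¬ (x.1 = c ∧ q <+: x.2) → k' x = k x := by
    intro x hx; rw [hk'def]; dsimp only; rw [if_neg hx]
  have hv_bumped : ∀ u : Pos, k' (c, q ++ i :: loneIdx i v :: u) = k (c, q ++ u) := by
    intro u
    rw [hk'def]; dsimp only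
    rw [if_pos (And.intro rfl (List.prefix_append q (i :: loneIdx i v :: u))),
      if_pos (show (q ++ [i, loneIdx i v]) <+: (q ++ i :: loneIdx i v :: u) from
        ⟨u, by simp⟩), drop_q2]
  have hv_mini : ∀ r : Pos, ¬ ((q ++ [i, loneIdx i v]) <+: (q ++ r)) →
      k' (c, q ++ r) = k (c, q) := by
    intro r hr
    rw [hk'def]; dsimp only
    rw [if_pos (And.intro rfl (List.prefix_append q r)), if_neg hr]
  have hag : ∀ x, k' (bump c q i (loneIdx i v) x) = k x := by
    intro x
    by_cases hx' : x.1 = c ∧ q <+: x.2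
    · obtain ⟨hx1, w, hw⟩ := hx'
      have hxx : x = (c, q ++ w) := Prod.ext hx1 hw.symm
      rw [hxx, bump_touched, hv_bumped]
    · rw [bump_untouched _ _ hx', hv_node x hx']
  have hvP : ∀ P : Pos, P.length ≤ 2 → P ≠ [i, loneIdx i v] → k' (c, q ++ P) = k (c, q) := by
    intro P hlen hne
    refine hv_mini P ?_
    intro hp
    have hl := hp.length_le
    simp at hl
    have : P.length = 2 := by omega
    have heq := hp.eq_of_length (by simp [this])
    exact hne (by simpa using heq.symm)
  have hchild1 : ∀ j : Fin 3, k' (c, q ++ [j]) = k (c, q) := by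
    intro j
    exact hvP [j] (by simp) (by simp)
  have hchild2 : ∀ j : Fin 3, k' (c, q ++ [i, j]) = k (c, q) := by
    intro j
    by_cases hj : (q ++ [i, loneIdx i v]) <+: (q ++ [i, j])
    · have heq := hj.eq_of_length (by simp)
      have h2 : loneIdx i v = j := by
        have := List.append_inj' heq rfl
        simpa using this.2
      rw [← h2]
      have := hv_bumped []
      simpa using this
    · exact hv_mini _ hj
  have hvq : k' (c, q) = k (c, q) := by
    have : k' (c, q ++ ([] : Pos)) = k (c, q) :=
      hv_mini [] (not_prefix_of_length_lt (by simp))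
    simpa using this
  have hk'child : ∀ (z : NodeId) (j : Fin 3),
      k' (childId (bump c q i (loneIdx i v) z) j) = k (childId z j) := by
    intro z j
    by_cases hz' : z.1 = c ∧ q <+: z.2
    · obtain ⟨hz1, w, hw⟩ := hz'
      have hzz : z = (c, q ++ w) := Prod.ext hz1 hw.symm
      rw [hzz, bump_touched, childId]
      have e1 : ((c, q ++ i :: loneIdx i v :: w) : NodeId).2 ++ [j]
          = q ++ i :: loneIdx i v :: (w ++ [j]) := by simp
      rw [show (((c, q ++ i :: loneIdx i v :: w) : NodeId).1,
          ((c, q ++ i :: loneIdx i v :: w) : NodeId).2 ++ [j])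
        = ((c, q ++ i :: loneIdx i v :: (w ++ [j])) : NodeId) from Prod.ext rfl e1]
      rw [hv_bumped, childId]
      simp
    · rw [bump_untouched _ _ hz']
      by_cases hcq : childId z j = ((c, q) : NodeId)
      · rw [hcq, hvq]
      · refine hv_node _ ?_
        rw [childId]
        rintro ⟨hh1, hh2⟩
        rcases prefix_snoc hh2 with hp | hp
        · exact hz' ⟨hh1, hp⟩
        · exact hcq (Prod.ext hh1.symm hp).symm
  refine ⟨k', ⟨?_, ?_, ?_⟩, hag⟩
  · intro x hx j
    by_cases hal : x.1 = c ∧ (q ++ [i, loneIdx i v]) <+: x.2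
    · obtain ⟨u, hu⟩ := hal.2
      have hxx : x = (c, q ++ i :: loneIdx i v :: u) := by
        refine Prod.ext hal.1 ?_
        rw [← hu]; simp
      rw [hxx, hv_bumped]
      refine hk.1 (c, q ++ u) ?_ j
      rw [Couple.IsNode]
      show ((Q.treeOf c).subtreeAt? (q ++ u)).isSome
      rw [h.subtree_q_below]
      rw [hxx, Couple.IsNode] at hx
      have hx2 : ((Q'.treeOf c).subtreeAt? (q ++ i :: loneIdx i v :: u)).isSome := hx
      rw [h.subtree_below, miniT_subtree_lone] at hx2
      exact hx2
    · by_cases hto : x.1 = c ∧ q <+: x.2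
      · obtain ⟨hx1, r, hr⟩ := hto
        have hxx : x = (c, q ++ r) := Prod.ext hx1 hr.symm
        rw [hxx, hv_mini r (fun hp => hal ⟨hx1, by rw [hxx]; exact hp⟩)]
        exact hk.1 _ h.node_q j
      · rw [hv_node x hto]
        rcases h.isNode_inv x hx with hn | hn
        · rw [unbumpB, if_neg (fun hh => hal hh)] at hn
          exact hk.1 x hn j
        · exact absurd ⟨hn.1, hn.2.1⟩ hto
  · intro x hx jc
    by_cases hn1 : x = ((c, q) : NodeId)
    · rw [hn1, hvq]
      have e0 : ∀ j : Fin 3, childId ((c, q) : NodeId) j = ((c, q ++ [j]) : NodeId) :=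
        fun _ => rfl
      rw [e0, e0, e0, hchild1, hchild1, hchild1]
      ring
    by_cases hn2 : x = ((c, q ++ [i]) : NodeId)
    · have e : ∀ j : Fin 3, childId ((c, q ++ [i]) : NodeId) j = (c, q ++ [i, j]) :=
        fun j => by simp [childId]
      rw [hn2, e, e, e, hchild2, hchild2, hchild2,
        hvP [i] (by simp) (by simp)]
      ring
    · obtain ⟨hbQ, hbump⟩ := h.isBranch_inv x hx hn1 hn2
      rw [← hbump, hag, hk'child, hk'child, hk'child]
      exact hk.2.1 _ hbQ jc
  · intro y hy
    rcases h.isLeaf_inv y hy with ⟨z, hz, rfl⟩ | ⟨hy1, r, hr, hshape⟩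
    · rw [h.pair_bump z hz, hag, hag]
      exact hk.2.2 z hz
    · have hyy : y = (c, q ++ r) := Prod.ext hy1 hr
      have hcov := bPairs_cover i v r hshape
      have hfacts := bPairs_facts i v
      rcases hcov with rfl | rfl | rfl | rfl
      · rw [hyy, h.pair_new1, hvP _ hfacts.2.1.1 hfacts.2.1.2, hvP _ hfacts.1.1 hfacts.1.2]
      · rw [hyy, h.pair_new1', hvP _ hfacts.1.1 hfacts.1.2, hvP _ hfacts.2.1.1 hfacts.2.1.2]
      · rw [hyy, h.pair_new2, hvP _ hfacts.2.2.2.1 hfacts.2.2.2.2,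
          hvP _ hfacts.2.2.1.1 hfacts.2.2.1.2]
      · rw [hyy, h.pair_new2', hvP _ hfacts.2.2.1.1 hfacts.2.2.1.2,
          hvP _ hfacts.2.2.2.1 hfacts.2.2.2.2]

end BCtx

/-- Scalar values for the special decoration of step B. -/
noncomputable def uB (i : Fin 3) (v : Bool) (r : Pos) : ℝ :=
  if r = (bPairs i v).1.1 ∨ r = (bPairs i v).1.2 then 1
  else if r = (bPairs i v).2.1 ∨ r = (bPairs i v).2.2 then 2
  else if r = [i] then (if i = 1 then 3 else 1) else 0

theorem uB_int (i : Fin 3) (v : Bool) (r : Pos) : ∃ m : ℤ, uB i v r = m := by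
  rw [uB]
  split_ifs
  exacts [⟨1, by norm_num⟩, ⟨2, by norm_num⟩, ⟨3, by norm_num⟩, ⟨1, by norm_num⟩,
    ⟨0, by norm_num⟩]

theorem uB_11 : uB i v (bPairs i v).1.1 = 1 := by rw [uB, if_pos (Or.inl rfl)]

theorem uB_12 : uB i v (bPairs i v).1.2 = 1 := by rw [uB, if_pos (Or.inr rfl)]

theorem uB_21 : uB i v (bPairs i v).2.1 = 2 := by
  rw [uB, if_neg, if_pos (Or.inl rfl)]
  rintro (hh | hh)
  exacts [bPairs_ne_11 hh, bPairs_ne_12 hh]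

theorem uB_22 : uB i v (bPairs i v).2.2 = 2 := by
  rw [uB, if_neg, if_pos (Or.inr rfl)]
  rintro (hh | hh)
  exacts [bPairs_ne_2211 hh, bPairs_ne_2212 hh]

theorem uB_lone (i : Fin 3) (v : Bool) (w : Pos) : uB i v (i :: loneIdx i v :: w) = 0 := by
  obtain ⟨h1, h2, h3, h4⟩ := lone_cons_ne_bPairs i v w
  rw [uB, if_neg (by rintro (hh | hh); exacts [h1 hh, h2 hh]),
    if_neg (by rintro (hh | hh); exacts [h3 hh, h4 hh]), if_neg]
  intro hh
  have := congrArg List.length hh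
  simp at this

theorem uB_nil (i : Fin 3) (v : Bool) : uB i v [] = 0 := by
  rcases fin3_cases i with rfl | rfl | rfl <;> cases v <;> simp (config := { decide := true }) [uB] <;> norm_num

theorem uB_root (i : Fin 3) (v : Bool) :
    uB i v [0] - uB i v [1] + uB i v [2] = 0 := by
  rcases fin3_cases i with rfl | rfl | rfl <;> cases v <;> simp (config := { decide := true }) [uB] <;> norm_num

theorem uB_n2eq (i : Fin 3) (v : Bool) :
    uB i v [i, 0] - uB i v [i, 1] + uB i v [i, 2] = uB i v [i] := by
  rcases fin3_cases i with rfl | rfl | rfl <;> cases v <;> simp (config := { decide := true }) [uB] <;> norm_num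

theorem uB_sq (i : Fin 3) (v : Bool) :
    uB i v [0] ^ 2 - uB i v [1] ^ 2 + uB i v [2] ^ 2 ≠ 0 := by
  rcases fin3_cases i with rfl | rfl | rfl <;> cases v <;> simp (config := { decide := true }) [uB] <;> norm_num

theorem ns1 (g : Fin 1 → ℝ) : normSqB 1 (fun _ => 1) g = g 0 ^ 2 := by
  rw [normSqB]; simp

namespace BCtx

variable {Q Q' : Couple} {c : Bool} {q : Pos} {i : Fin 3} {v : Bool} {S : TTree}
  (h : BCtx Q Q' c q i v S)
include h

theorem special : ∃ k : NodeId → Fin 1 → ℝ, IsDecoration Q' 1 1 k ∧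
    (∀ x, Q'.IsBranch x → x ≠ ((c, q) : NodeId) → x ≠ ((c, q ++ [i]) : NodeId) →
      OmegaN 1 (fun _ => 1) k x = 0) ∧
    OmegaN 1 (fun _ => 1) k (c, q) ≠ 0 := by
  classical
  set k : NodeId → Fin 1 → ℝ := fun x _ =>
    if x.1 = c ∧ q <+: x.2 then uB i v (x.2.drop q.length) else 0 with hkdef
  have hvP : ∀ (r : Pos) (jc : Fin 1), k (c, q ++ r) jc = uB i v r := by
    intro r jc
    rw [hkdef]; dsimp only
    rw [if_pos (And.intro rfl (List.prefix_append q r)), List.drop_left]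
  have hv0 : ∀ x : NodeId, ¬ (x.1 = c ∧ q <+: x.2) → ∀ jc, k x jc = 0 := by
    intro x hx jc; rw [hkdef]; dsimp only; rw [if_neg hx]
  have hvq : ∀ jc, k (c, q) jc = uB i v [] := by
    intro jc
    have := hvP [] jc
    simpa using this
  have hvbump : ∀ (z : NodeId) (jc : Fin 1), k (bump c q i (loneIdx i v) z) jc = 0 := by
    intro z jc
    by_cases hz' : z.1 = c ∧ q <+: z.2
    · obtain ⟨hz1, w, hw⟩ := hz'
      have hzz : z = (c, q ++ w) := Prod.ext hz1 hw.symm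
      rw [hzz, bump_touched, hvP _ jc, uB_lone]
    · rw [bump_untouched _ _ hz', hv0 z hz' jc]
  have hvchild : ∀ (z : NodeId) (j : Fin 3) (jc : Fin 1),
      k (childId (bump c q i (loneIdx i v) z) j) jc = 0 := by
    intro z j jc
    by_cases hz' : z.1 = c ∧ q <+: z.2
    · obtain ⟨hz1, w, hw⟩ := hz'
      have hzz : z = (c, q ++ w) := Prod.ext hz1 hw.symm
      have e1 : childId (bump c q i (loneIdx i v) z) j
          = (c, q ++ i :: loneIdx i v :: (w ++ [j])) := by
        rw [hzz, bump_touched, childId]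
        simp
      rw [e1, hvP _ jc, uB_lone]
    · rw [bump_untouched _ _ hz']
      by_cases hcq : childId z j = ((c, q) : NodeId)
      · rw [hcq, hvq jc, uB_nil]
      · refine hv0 _ ?_ jc
        rw [childId]
        rintro ⟨hh1, hh2⟩
        rcases prefix_snoc hh2 with hp | hp
        · exact hz' ⟨hh1, hp⟩
        · exact hcq (Prod.ext hh1.symm hp).symm
  have homega0 : ∀ x, Q'.IsBranch x → x ≠ ((c, q) : NodeId) → x ≠ ((c, q ++ [i]) : NodeId) →
      OmegaN 1 (fun _ => 1) k x = 0 := by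
    intro x hx hn1 hn2
    obtain ⟨hbQ, hbump⟩ := h.isBranch_inv x hx hn1 hn2
    rw [← hbump, OmegaN, ns1, ns1, ns1, ns1, hvchild _ _ 0, hvchild _ _ 0,
      hvchild _ _ 0, hvbump _ 0]
    norm_num
  refine ⟨k, ⟨?_, ?_, ?_⟩, homega0, ?_⟩
  · intro x _ jc
    rw [hkdef]; dsimp only
    split_ifs with hsplit
    · obtain ⟨m, hm⟩ := uB_int i v (x.2.drop q.length)
      exact ⟨m, by rw [hm]; norm_num⟩
    · exact ⟨0, by norm_num⟩
  · intro x hx jc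
    by_cases hn1 : x = ((c, q) : NodeId)
    · have e0 : ∀ j : Fin 3, childId ((c, q) : NodeId) j = ((c, q ++ [j]) : NodeId) :=
        fun _ => rfl
      rw [hn1, e0, e0, e0, hvq jc, hvP _ jc, hvP _ jc, hvP _ jc, uB_nil]
      have := uB_root i v
      linarith
    by_cases hn2 : x = ((c, q ++ [i]) : NodeId)
    · have e : ∀ j : Fin 3, childId ((c, q ++ [i]) : NodeId) j = (c, q ++ [i, j]) :=
        fun j => by simp [childId]
      rw [hn2, e, e, e, hvP _ jc, hvP _ jc, hvP _ jc, hvP _ jc]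
      have := uB_n2eq i v
      linarith
    · obtain ⟨hbQ, hbump⟩ := h.isBranch_inv x hx hn1 hn2
      rw [← hbump, hvbump _ jc, hvchild _ _ jc, hvchild _ _ jc, hvchild _ _ jc]
      norm_num
  · intro y hy
    rcases h.isLeaf_inv y hy with ⟨z, hz, rfl⟩ | ⟨hy1, r, hr, hshape⟩
    · rw [h.pair_bump z hz]
      funext jc
      rw [hvbump _ jc, hvbump _ jc]
    · have hyy : y = (c, q ++ r) := Prod.ext hy1 hr
      have hcov := bPairs_cover i v r hshape
      funext jc
      rcases hcov with rfl | rfl | rfl | rfl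
      · rw [hyy, h.pair_new1, hvP _ jc, hvP _ jc, uB_11, uB_12]
      · rw [hyy, h.pair_new1', hvP _ jc, hvP _ jc, uB_12, uB_11]
      · rw [hyy, h.pair_new2, hvP _ jc, hvP _ jc, uB_21, uB_22]
      · rw [hyy, h.pair_new2', hvP _ jc, hvP _ jc, uB_22, uB_21]
  · have e0 : ∀ j : Fin 3, childId ((c, q) : NodeId) j = ((c, q ++ [j]) : NodeId) :=
      fun _ => rfl
    rw [OmegaN, e0, e0, e0, ns1, ns1, ns1, ns1, hvq 0, hvP _ 0, hvP _ 0, hvP _ 0, uB_nil]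
    have := uB_sq i v
    intro hh
    apply this
    nlinarith [hh]

end BCtx

theorem stepB_good {Q Q' : Couple} (hB : StepB Q Q') (ih : ∃! M, Good Q M) :
    ∃! M, Good Q' M := by
  classical
  obtain ⟨c, q, i, v, S, hS, htc, htn, hqp⟩ := hB
  have h : BCtx Q Q' c q i v S := ⟨hS, htc, htn, hqp⟩
  obtain ⟨M, hM, hMuniq⟩ := ih
  have hne12 : ((c, q) : NodeId) ≠ (c, q ++ [i]) := by
    intro hh
    have := congrArg (fun y : NodeId => y.2.length) hh
    simp at this
  set M' : NodeId → NodeId := fun x =>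
    if x = ((c, q) : NodeId) then (c, q ++ [i])
    else if x = ((c, q ++ [i]) : NodeId) then (c, q)
    else if isBranchB (Q'.treeOf x.1) x.2 then
      bump c q i (loneIdx i v) (M (unbumpB c q i (loneIdx i v) x))
    else x with hM'def
  have hM'n1 : M' (c, q) = (c, q ++ [i]) := by
    rw [hM'def]; dsimp only; rw [if_pos rfl]
  have hM'n2 : M' (c, q ++ [i]) = (c, q) := by
    rw [hM'def]; dsimp only; rw [if_neg (Ne.symm hne12), if_pos rfl]
  have hM'br : ∀ x, Q'.IsBranch x → x ≠ ((c, q) : NodeId) → x ≠ ((c, q ++ [i]) : NodeId) →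
      M' x = bump c q i (loneIdx i v) (M (unbumpB c q i (loneIdx i v) x)) := by
    intro x hx h1 h2
    rw [hM'def]; dsimp only
    rw [if_neg h1, if_neg h2, if_pos ((isBranchB_iff _ _).mpr hx)]
  have hM'nb : ∀ x, ¬ Q'.IsBranch x → M' x = x := by
    intro x hx
    rw [hM'def]; dsimp only
    rw [if_neg (fun hh => hx (by rw [hh]; exact h.isBranch_n1)),
      if_neg (fun hh => hx (by rw [hh]; exact h.isBranch_n2)),
      if_neg (fun hh => hx ((isBranchB_iff _ _).mp hh))]
  have hGood : Good Q' M' := by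
    refine ⟨?_, ?_, ?_, ?_, ?_⟩
    · intro x hx
      by_cases h1 : x = ((c, q) : NodeId)
      · rw [h1, hM'n1]; exact h.isBranch_n2
      by_cases h2 : x = ((c, q ++ [i]) : NodeId)
      · rw [h2, hM'n2]; exact h.isBranch_n1
      · rw [hM'br x hx h1 h2]
        exact h.isBranch_bump _ (hM.1 _ (h.isBranch_inv x hx h1 h2).1)
    · intro x hx
      by_cases h1 : x = ((c, q) : NodeId)
      · rw [h1, hM'n1, hM'n2]
      by_cases h2 : x = ((c, q ++ [i]) : NodeId)
      · rw [h2, hM'n2, hM'n1]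
      · obtain ⟨hbQ, hbump⟩ := h.isBranch_inv x hx h1 h2
        rw [hM'br x hx h1 h2]
        have hMz := hM.1 _ hbQ
        rw [hM'br _ (h.isBranch_bump _ hMz) (bump_ne_n1 _ _ _ _ _) (bump_ne_n2 _ _ _ _ _),
          unbump_bump, hM.2.1 _ hbQ, hbump]
    · intro x hx
      by_cases h1 : x = ((c, q) : NodeId)
      · rw [h1, hM'n1]; exact Ne.symm hne12
      by_cases h2 : x = ((c, q ++ [i]) : NodeId)
      · rw [h2, hM'n2]; exact hne12
      · obtain ⟨hbQ, hbump⟩ := h.isBranch_inv x hx h1 h2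
        rw [hM'br x hx h1 h2]
        intro hh
        apply hM.2.2.1 _ hbQ
        have := congrArg (unbumpB c q i (loneIdx i v)) hh
        rw [unbump_bump] at this
        rw [this, ← hbump, unbump_bump]
    · exact hM'nb
    · intro d hd L hL β hβ k hk x hx
      by_cases h1 : x = ((c, q) : NodeId)
      · rw [h1, hM'n1]
        exact h.omega_rel hk β
      by_cases h2 : x = ((c, q ++ [i]) : NodeId)
      · rw [h2, hM'n2]
        have := h.omega_rel hk β
        linarith
      · obtain ⟨hbQ, hbump⟩ := h.isBranch_inv x hx h1 h2
        rw [hM'br x hx h1 h2]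
        have H5 := hM.2.2.2.2 d hd L hL β hβ _ (h.decor_restrict hk) _ hbQ
        rw [h.omega_bump hk β, h.omega_bump hk β, hbump] at H5
        rw [signR_bump,
          show signR x = signR (unbumpB c q i (loneIdx i v) x) from
            (congrArg signR hbump).symm.trans (signR_bump c q i v _)]
        exact H5
  refine ⟨M', hGood, ?_⟩
  intro M'' hM''
  have hM''n1 : M'' (c, q) = (c, q ++ [i]) := by
    by_contra hne'
    have hy := hM''.1 _ h.isBranch_n1
    have hyl := hM''.2.2.1 _ h.isBranch_n1
    obtain ⟨k0, hdec, hzero, hΩ⟩ := h.special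
    have hcond := hM''.2.2.2.2 1 le_rfl 1 one_pos (fun _ => 1) (fun _ => one_pos) k0 hdec
      _ h.isBranch_n1
    rw [hzero _ hy hyl hne', mul_zero] at hcond
    exact (mul_ne_zero (signR_ne_zero _) hΩ) (by linarith)
  have hM''n2 : M'' (c, q ++ [i]) = (c, q) := by
    have := hM''.2.1 _ h.isBranch_n1
    rw [hM''n1] at this
    exact this
  have hbr : ∀ z, Q.IsBranch z →
      Q'.IsBranch (M'' (bump c q i (loneIdx i v) z)) ∧
      M'' (bump c q i (loneIdx i v) z) ≠ ((c, q) : NodeId) ∧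
      M'' (bump c q i (loneIdx i v) z) ≠ ((c, q ++ [i]) : NodeId) := by
    intro z hz
    have hbz := h.isBranch_bump z hz
    refine ⟨hM''.1 _ hbz, ?_, ?_⟩
    · intro hh
      have := hM''.2.1 _ hbz
      rw [hh, hM''n1] at this
      exact bump_ne_n2 c q i (loneIdx i v) z this.symm
    · intro hh
      have := hM''.2.1 _ hbz
      rw [hh, hM''n2] at this
      exact bump_ne_n1 c q i (loneIdx i v) z this.symm
  set M₀ : NodeId → NodeId := fun z =>
    if isBranchB (Q.treeOf z.1) z.2 then
      unbumpB c q i (loneIdx i v) (M'' (bump c q i (loneIdx i v) z))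
    else z with hM₀def
  have hM₀b : ∀ z, Q.IsBranch z →
      M₀ z = unbumpB c q i (loneIdx i v) (M'' (bump c q i (loneIdx i v) z)) := by
    intro z hz; rw [hM₀def]; dsimp only; rw [if_pos ((isBranchB_iff _ _).mpr hz)]
  have hM₀n : ∀ z, ¬ Q.IsBranch z → M₀ z = z := by
    intro z hz; rw [hM₀def]; dsimp only
    rw [if_neg (fun hh => hz ((isBranchB_iff _ _).mp hh))]
  have hM₀fact : ∀ z, Q.IsBranch z → Q.IsBranch (M₀ z) ∧
      bump c q i (loneIdx i v) (M₀ z) = M'' (bump c q i (loneIdx i v) z) := by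
    intro z hz
    obtain ⟨hy, hy1, hy2⟩ := hbr z hz
    rw [hM₀b z hz]
    exact h.isBranch_inv _ hy hy1 hy2
  have hM₀M : M₀ = M := by
    refine hMuniq M₀ ⟨?_, ?_, ?_, ?_, ?_⟩
    · intro z hz; exact (hM₀fact z hz).1
    · intro z hz
      obtain ⟨hb1, hb2⟩ := hM₀fact z hz
      rw [hM₀b _ hb1, hb2, hM''.2.1 _ (h.isBranch_bump z hz), unbump_bump]
    · intro z hz
      intro hh
      have := (hM₀fact z hz).2
      rw [hh] at this
      exact hM''.2.2.1 _ (h.isBranch_bump z hz) this.symm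
    · exact hM₀n
    · intro d hd L hL β hβ k hk z hz
      obtain ⟨k', hk', hag⟩ := h.decor_extend hk
      have hagf : (fun y => k' (bump c q i (loneIdx i v) y)) = k := funext hag
      obtain ⟨hb1, hb2⟩ := hM₀fact z hz
      have H5 := hM''.2.2.2.2 d hd L hL β hβ k' hk' _ (h.isBranch_bump z hz)
      rw [← hb2, ← h.omega_bump hk' β (M₀ z), ← h.omega_bump hk' β z,
        signR_bump, signR_bump, hagf] at H5
      exact H5
  funext x
  by_cases h1 : x = ((c, q) : NodeId)
  · rw [h1, hM''n1, hM'n1]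
  by_cases h2 : x = ((c, q ++ [i]) : NodeId)
  · rw [h2, hM''n2, hM'n2]
  by_cases hxb : Q'.IsBranch x
  · obtain ⟨hbQ, hbump⟩ := h.isBranch_inv x hxb h1 h2
    have e1 : M'' x = bump c q i (loneIdx i v)
        (M₀ (unbumpB c q i (loneIdx i v) x)) := by
      rw [(hM₀fact _ hbQ).2, hbump]
    rw [e1, hM₀M, hM'br x hxb h1 h2]
  · rw [hM''.2.2.2.1 x hxb, hM'nb x hxb]

/-- Proposition 3.2 of Deng–Hani: for a regular couple there is exactly one perfect matching
of the set of branching nodes such that `ζ_{n'} Ω_{n'} = - ζ_n Ω_n` for every matched pair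
`{n, n'}`, every dimension `d ≥ 1`, every `L > 0`, every `β ∈ (ℝ⁺)^d` and every decoration.
(The matching is encoded as a fixed-point-free involution of the set of branching nodes,
extended by the identity elsewhere.) -/
theorem unique_branch_node_pairing (Q : Couple) (hQ : Regular Q) :
    ∃! M : NodeId → NodeId,
      (∀ x, Q.IsBranch x → Q.IsBranch (M x)) ∧
      (∀ x, Q.IsBranch x → M (M x) = x) ∧
      (∀ x, Q.IsBranch x → M x ≠ x) ∧
      (∀ x, ¬ Q.IsBranch x → M x = x) ∧
      ∀ (d : ℕ), 1 ≤ d → ∀ L : ℝ, 0 < L → ∀ β : Fin d → ℝ, (∀ j, 0 < β j) →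
        ∀ k : NodeId → Fin d → ℝ, IsDecoration Q d L k →
          ∀ x, Q.IsBranch x →
            signR (M x) * OmegaN d β k (M x) = -(signR x * OmegaN d β k x) := by
  induction hQ with
  | refl => exact good_trivial
  | tail _ step ih =>
    rcases step with hA | hB
    · exact stepA_good hA ih
    · exact stepB_good hB ih

end WKE
end

section
/- Let T be a ternary tree of scale n. For each node m of T let μ_m denote the number of leaves of the subtree of T rooted at m, and for each branching node n let μ°_n be the second largest (counted with multiplicity) of the three values μ_m over the children m of n. Then the product of μ°_n over all branching nodes n of T is at most 3^n/(2n+1). -/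
namespace WKE

/-- The number of leaves of a tree. -/
def TTree.leavesCount : TTree → ℕ
  | .leaf => 1
  | .node a b c => a.leavesCount + b.leavesCount + c.leavesCount

/-- The second largest (counted with multiplicity) of three natural numbers, i.e. their
median. -/
def secondMax (x y z : ℕ) : ℕ := max (min x y) (min (max x y) z)

/-- The product, over all branching nodes `n` of the tree, of `μ°_n`, the second maximum of
the numbers of leaves of the subtrees rooted at the three children of `n`. -/
def TTree.muProd : TTree → ℕ
  | .leaf => 1
  | .node a b c =>
      secondMax a.leavesCount b.leavesCount c.leavesCount * (a.muProd * (b.muProd * c.muProd))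

lemma leavesCount_eq (t : TTree) : t.leavesCount = 2 * t.scale + 1 := by
  induction t with
  | leaf => rfl
  | node a b c ha hb hc => simp [TTree.leavesCount, TTree.scale, ha, hb, hc]; ring

lemma leavesCount_pos (t : TTree) : 1 ≤ t.leavesCount := by
  rw [leavesCount_eq]; omega

lemma med_key {a b c : ℕ} (ha : 1 ≤ a) (hc : 1 ≤ c) (h1 : a ≤ b) (h2 : b ≤ c) :
    b * (a + b + c) ≤ 3 * (a * b * c) := by
  have h3 : a + b + c ≤ a + 2 * c := by omega
  have h4 : a + 2 * c ≤ 3 * (a * c) := by nlinarith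
  calc b * (a + b + c) ≤ b * (3 * (a * c)) :=
        Nat.mul_le_mul_left _ (le_trans h3 h4)
    _ = 3 * (a * b * c) := by ring

lemma secondMax_key {x y z : ℕ} (hx : 1 ≤ x) (hy : 1 ≤ y) (hz : 1 ≤ z) :
    secondMax x y z * (x + y + z) ≤ 3 * (x * y * z) := by
  unfold secondMax
  rcases le_total x y with h1 | h1 <;> rcases le_total y z with h2 | h2 <;>
    rcases le_total x z with h3 | h3 <;>
    simp [min_eq_left, min_eq_right, max_eq_left, max_eq_right, h1, h2, h3]
  · linarith [med_key hx hz h1 h2]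
  · linarith [med_key hx hz h1 h2]
  · linarith [med_key hx hy h3 h2]
  · linarith [med_key hz hy h3 h1]
  · linarith [med_key hy hz h1 h3]
  · linarith [med_key hy hx h2 h3]
  · linarith [med_key hy hz h1 h3]
  · linarith [med_key hz hx h2 h1]

lemma muProd_mul_le (t : TTree) : t.muProd * t.leavesCount ≤ 3 ^ t.scale := by
  induction t with
  | leaf => simp [TTree.muProd, TTree.leavesCount, TTree.scale]
  | node a b c ha hb hc =>
      have key := secondMax_key (leavesCount_pos a) (leavesCount_pos b) (leavesCount_pos c)
      calc (TTree.node a b c).muProd * (TTree.node a b c).leavesCount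
          = secondMax a.leavesCount b.leavesCount c.leavesCount
              * (a.leavesCount + b.leavesCount + c.leavesCount)
              * (a.muProd * b.muProd * c.muProd) := by
            simp [TTree.muProd, TTree.leavesCount]; ring
        _ ≤ 3 * (a.leavesCount * b.leavesCount * c.leavesCount)
              * (a.muProd * b.muProd * c.muProd) :=
            Nat.mul_le_mul_right _ key
        _ = 3 * ((a.muProd * a.leavesCount) * (b.muProd * b.leavesCount)
              * (c.muProd * c.leavesCount)) := by ring
        _ ≤ 3 * (3 ^ a.scale * 3 ^ b.scale * 3 ^ c.scale) := by
            exact Nat.mul_le_mul_left _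
              (Nat.mul_le_mul (Nat.mul_le_mul ha hb) hc)
        _ = 3 ^ (TTree.node a b c).scale := by
            simp [TTree.scale, pow_add]; ring

/-- Lemma 5.2 of Deng–Hani: for a ternary tree of scale `n`, the product over all branching
nodes of the second maximum of the leaf counts of the children subtrees is at most
`3 ^ n / (2 n + 1)`. -/
theorem muProd_le (t : TTree) :
    (t.muProd : ℝ) ≤ 3 ^ t.scale / (2 * t.scale + 1) := by
  have hpos : (0 : ℝ) < 2 * t.scale + 1 := by positivity
  rw [le_div_iff₀ hpos]
  have h := muProd_mul_le t
  rw [leavesCount_eq] at h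
  calc (t.muProd : ℝ) * (2 * t.scale + 1)
      = ((t.muProd * (2 * t.scale + 1) : ℕ) : ℝ) := by push_cast; ring
    _ ≤ ((3 ^ t.scale : ℕ) : ℝ) := by exact_mod_cast h
    _ = 3 ^ t.scale := by push_cast; ring

end WKE
end

section
/- There is an absolute constant C such that for every n ≥ 1 and every multi-index ρ = (ρ₁,…,ρ_n) ∈ ℕ^n one has ∑ ρ!/(ρ¹!ρ²!⋯ρ⁹!) · (2|ρ¹|)!(2|ρ²|)!⋯(2|ρ⁹|)! ≤ C·(2|ρ|)!, where the sum ranges over all ordered 9-tuples (ρ¹,…,ρ⁹) of multi-indices in ℕ^n with ρ¹+⋯+ρ⁹ = ρ componentwise. -/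
/-!
The weight `ρ!/(ρ¹!⋯ρ⁹!)` is the product over the coordinates `j` of the multinomial
coefficients `(ρⱼ; ρ¹ⱼ, …, ρ⁹ⱼ)`, while `∏ᵢ (2|ρⁱ|)!` depends only on the lengths `kᵢ = |ρⁱ|`.
Summing the weights over the tuples with given lengths `k` gives `(|ρ|; k₁, …, k₉)`, by comparing
coefficients of `X^k` in `∏ⱼ (X₁ + ⋯ + X₉)^ρⱼ = (X₁ + ⋯ + X₉)^|ρ|`. This reduces the claim to
`∑_{k₁+⋯+k₉ = m} (m; k) ∏ᵢ (2kᵢ)! ≤ 3⁹ (2m)!`, which follows by splitting off one part at a time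
from `∑_{a+b=m} (m choose a) (2a)! (2b)! ≤ 3 (2m)!`: the two extreme terms equal `(2m)!`, and as
`(m choose a)² ≤ (2m choose 2a)`, every other term is at most `(2m)!/(m choose a) ≤ (2m)!/m`.
-/

namespace WKE

open Finset Nat MvPolynomial

lemma le_choose_of_pos_of_lt {m k : ℕ} (hk : 0 < k) (hkm : k < m) : m ≤ m.choose k := by
  obtain ⟨t, rfl⟩ : ∃ t, k = t + 1 := ⟨k - 1, by omega⟩
  obtain ⟨p, rfl⟩ : ∃ p, m = p + 1 := ⟨m - 1, by omega⟩
  have ht : t + 1 ≤ p.choose t :=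
    (choose_succ_self_right t).symm.le.trans (choose_le_choose t (by omega))
  refine Nat.le_of_mul_le_mul_right ?_ (succ_pos t)
  calc (p + 1) * (t + 1) ≤ (p + 1) * p.choose t := Nat.mul_le_mul_left _ ht
    _ = (p + 1).choose (t + 1) * (t + 1) := add_one_mul_choose_eq p t

lemma choose_mul_choose_le_choose_two_mul (m k : ℕ) :
    m.choose k * m.choose k ≤ (2 * m).choose (2 * k) := by
  rw [two_mul, two_mul, add_choose_eq]
  exact single_le_sum (f := fun p : ℕ × ℕ => m.choose p.1 * m.choose p.2)
    (fun _ _ => Nat.zero_le _) (mem_antidiagonal.mpr rfl : (k, k) ∈ antidiagonal (k + k))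

lemma choose_mul_choose_mul_factorial_two_mul_le (a b : ℕ) :
    (a + b).choose a * ((a + b).choose a * ((2 * a)! * (2 * b)!)) ≤ (2 * (a + b))! := by
  calc (a + b).choose a * ((a + b).choose a * ((2 * a)! * (2 * b)!))
      = ((a + b).choose a * (a + b).choose a) * ((2 * a)! * (2 * b)!) := by ring
    _ ≤ (2 * (a + b)).choose (2 * a) * ((2 * a)! * (2 * b)!) := by
      gcongr; exact choose_mul_choose_le_choose_two_mul _ _
    _ = (2 * (a + b))! := by
      rw [mul_add, ← mul_assoc, choose_symm_add, add_choose_mul_factorial_mul_factorial]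

lemma sum_antidiagonal_choose_mul_factorial_two_mul_le (m : ℕ) :
    ∑ p ∈ antidiagonal m, m.choose p.1 * ((2 * p.1)! * (2 * p.2)!) ≤ 3 * (2 * m)! := by
  obtain _ | m := m
  · simp
  set T : ℕ → ℕ → ℕ := fun a b => (m + 1).choose a * ((2 * a)! * (2 * b)!)
  have term_le (a b : ℕ) (hab : a + b = m + 1) : (m + 1).choose a * T a b ≤ (2 * (m + 1))! := by
    simpa only [T, hab] using choose_mul_choose_mul_factorial_two_mul_le a b
  have inner : ∑ i ∈ range m, T (i + 1) (m + 1 - (i + 1)) ≤ (2 * (m + 1))! := by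
    refine Nat.le_of_mul_le_mul_left ?_ (succ_pos m)
    calc (m + 1) * ∑ i ∈ range m, T (i + 1) (m + 1 - (i + 1))
        ≤ ∑ _i ∈ range m, (2 * (m + 1))! := by
          rw [mul_sum]
          refine sum_le_sum fun i hi => ?_
          have hi : i < m := mem_range.mp hi
          exact (Nat.mul_le_mul_right _ (le_choose_of_pos_of_lt (succ_pos i) (by omega))).trans
            (term_le _ _ (by omega))
      _ ≤ (m + 1) * (2 * (m + 1))! := by
          rw [sum_const, card_range, smul_eq_mul]; exact Nat.mul_le_mul_right _ m.le_succ
  have first : T 0 (m + 1 - 0) = (2 * (m + 1))! := by simp [T]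
  have last : T (m + 1) (m + 1 - (m + 1)) = (2 * (m + 1))! := by simp [T]
  rw [sum_antidiagonal_eq_sum_range_succ T, sum_range_succ, sum_range_succ', first, last]
  omega

lemma sum_antidiagonalTuple_succ {M : Type*} [AddCommMonoid M] (r m : ℕ)
    (f : (Fin (r + 1) → ℕ) → M) :
    ∑ k ∈ antidiagonalTuple (r + 1) m, f k =
      ∑ p ∈ antidiagonal m, ∑ t ∈ antidiagonalTuple r p.2, f (Fin.cons p.1 t) := by
  change (Multiset.map f (Multiset.Nat.antidiagonalTuple (r + 1) m)).sum = _
  rw [Multiset.Nat.antidiagonalTuple, List.Nat.antidiagonalTuple, Multiset.map_coe,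
    Multiset.sum_coe, List.map_flatMap]
  simp only [List.flatMap, List.sum_flatten, List.map_map]
  rfl

lemma multinomial_univ_cons {r : ℕ} (a : ℕ) (t : Fin r → ℕ) :
    multinomial univ (Fin.cons a t : Fin (r + 1) → ℕ) =
      (a + ∑ i, t i).choose a * multinomial univ t := by
  rw [Fin.univ_succ, multinomial_cons]
  simp [Nat.multinomial]

lemma sum_multinomial_mul_prod_factorial_two_mul_le (r m : ℕ) :
    ∑ k ∈ antidiagonalTuple r m, multinomial univ k * ∏ i, (2 * k i)! ≤ 3 ^ r * (2 * m)! := by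
  induction r generalizing m with
  | zero => cases m <;> simp
  | succ r ih =>
    rw [sum_antidiagonalTuple_succ]
    calc ∑ p ∈ antidiagonal m, ∑ t ∈ antidiagonalTuple r p.2,
          multinomial univ (Fin.cons p.1 t : Fin (r + 1) → ℕ) *
            ∏ i, (2 * (Fin.cons p.1 t : Fin (r + 1) → ℕ) i)!
        = ∑ p ∈ antidiagonal m, m.choose p.1 * (2 * p.1)! *
            ∑ t ∈ antidiagonalTuple r p.2, multinomial univ t * ∏ i, (2 * t i)! := by
          refine sum_congr rfl fun p hp => ?_
          rw [mul_sum]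
          refine sum_congr rfl fun t ht => ?_
          rw [multinomial_univ_cons, Fin.prod_univ_succ, mem_antidiagonalTuple.mp ht,
            mem_antidiagonal.mp hp]
          simp only [Fin.cons_zero, Fin.cons_succ]
          ring
      _ ≤ ∑ p ∈ antidiagonal m, m.choose p.1 * (2 * p.1)! * (3 ^ r * (2 * p.2)!) := by
          gcongr with p; exact ih p.2
      _ = 3 ^ r * ∑ p ∈ antidiagonal m, m.choose p.1 * ((2 * p.1)! * (2 * p.2)!) := by
          rw [mul_sum]; exact sum_congr rfl fun _ _ => by ring
      _ ≤ 3 ^ (r + 1) * (2 * m)! := by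
          rw [pow_succ, mul_assoc]
          exact Nat.mul_le_mul_left _ (sum_antidiagonal_choose_mul_factorial_two_mul_le m)

lemma coeff_prod_X_pow_equivFunOnFinite {r : ℕ} (k t : Fin r → ℕ) :
    coeff (Finsupp.equivFunOnFinite.symm k) (∏ i, (X i : MvPolynomial (Fin r) ℕ) ^ t i) =
      if t = k then 1 else 0 := by
  rw [coeff_prod_X_pow]
  congr 1
  simp [Finsupp.ext_iff, funext_iff, eq_comm]

lemma sum_prod_multinomial_eq_multinomial {ι : Type*} [Fintype ι] [DecidableEq ι] {r : ℕ}
    (ρ : ι → ℕ) (k : Fin r → ℕ) (hk : ∑ i, k i = ∑ j, ρ j) :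
    ∑ τ ∈ (Fintype.piFinset fun j => antidiagonalTuple r (ρ j)) with (fun i => ∑ j, τ j i) = k,
      ∏ j, multinomial univ (τ j) = multinomial univ k := by
  set P : MvPolynomial (Fin r) ℕ := ∑ i, X i
  have expand (N : ℕ) :
      P ^ N = ∑ t ∈ antidiagonalTuple r N, C (multinomial univ t) * ∏ i, X i ^ t i := by
    rw [sum_pow_eq_sum_piAntidiag, piAntidiag_univ_fin_eq_antidiagonalTuple]
    simp_rw [← C_eq_coe_nat, Nat.cast_id]
  have expand_prod : ∏ j, P ^ ρ j = ∑ τ ∈ Fintype.piFinset fun j => antidiagonalTuple r (ρ j),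
      C (∏ j, multinomial univ (τ j)) * ∏ i, X i ^ ∑ j, τ j i := by
    simp_rw [expand, prod_univ_sum, prod_mul_distrib, map_prod]
    refine sum_congr rfl fun τ _ => ?_
    rw [prod_comm]
    simp_rw [prod_pow_eq_pow_sum]
  have hcoeff := congrArg (coeff (Finsupp.equivFunOnFinite.symm k))
    ((prod_pow_eq_pow_sum univ ρ P).symm.trans expand_prod)
  simp only [expand, coeff_sum, coeff_C_mul, coeff_prod_X_pow_equivFunOnFinite,
    mul_ite, mul_one, mul_zero, sum_ite_eq', mem_antidiagonalTuple, hk, if_true] at hcoeff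
  rw [hcoeff, sum_filter]

lemma sum_prod_multinomial_mul_prod_factorial_two_mul_le {ι : Type*} [Fintype ι]
    [DecidableEq ι] (r : ℕ) (ρ : ι → ℕ) :
    ∑ τ ∈ Fintype.piFinset (fun j => antidiagonalTuple r (ρ j)),
        (∏ j, multinomial univ (τ j)) * ∏ i, (2 * ∑ j, τ j i)! ≤ 3 ^ r * (2 * ∑ j, ρ j)! := by
  have maps_to : ∀ τ ∈ Fintype.piFinset (fun j => antidiagonalTuple r (ρ j)),
      (fun i => ∑ j, τ j i) ∈ antidiagonalTuple r (∑ j, ρ j) := by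
    intro τ hτ
    rw [mem_antidiagonalTuple, sum_comm]
    exact sum_congr rfl fun j _ => mem_antidiagonalTuple.mp (Fintype.mem_piFinset.mp hτ j)
  rw [← sum_fiberwise_of_maps_to maps_to]
  calc ∑ k ∈ antidiagonalTuple r (∑ j, ρ j),
        ∑ τ ∈ (Fintype.piFinset fun j => antidiagonalTuple r (ρ j)) with
          (fun i => ∑ j, τ j i) = k, (∏ j, multinomial univ (τ j)) * ∏ i, (2 * ∑ j, τ j i)!
      = ∑ k ∈ antidiagonalTuple r (∑ j, ρ j), multinomial univ k * ∏ i, (2 * k i)! := by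
        refine sum_congr rfl fun k hk => ?_
        rw [← sum_prod_multinomial_eq_multinomial ρ k (mem_antidiagonalTuple.mp hk), sum_mul]
        refine sum_congr rfl fun τ hτ => ?_
        obtain ⟨-, rfl⟩ := mem_filter.mp hτ
        rfl
    _ ≤ 3 ^ r * (2 * ∑ j, ρ j)! := sum_multinomial_mul_prod_factorial_two_mul_le r _

lemma cast_factorial_sum_div_prod_factorial {α K : Type*} [Field K] [CharZero K]
    (s : Finset α) (f : α → ℕ) :
    ((∑ i ∈ s, f i)! : K) / ∏ i ∈ s, ((f i)! : K) = multinomial s f := by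
  rw [div_eq_iff (prod_ne_zero_iff.mpr fun i _ => mod_cast factorial_ne_zero (f i)), mul_comm]
  exact_mod_cast (multinomial_spec s f).symm

/-- Lemma (combinatorial inequality, Lemma A.3 of Deng–Hani): there is an absolute constant
`C` such that for every `n ≥ 1` and every multi-index `ρ ∈ ℕ^n`,
`∑ ρ!/(ρ¹!⋯ρ⁹!) ⬝ (2|ρ¹|)!⋯(2|ρ⁹|)! ≤ C (2|ρ|)!`, the sum ranging over all ordered 9-tuples
of multi-indices with `ρ¹ + ⋯ + ρ⁹ = ρ` componentwise.  Here a 9-tuple of multi-indices is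
encoded as `τ : Fin n → Fin 9 → ℕ` with `∑ i, τ j i = ρ j` for each `j`, the `i`-th
multi-index being `ρⁱ = fun j => τ j i`. -/
theorem multiindex_factorial_sum_bound :
    ∃ C : ℝ, ∀ n : ℕ, 1 ≤ n → ∀ ρ : Fin n → ℕ,
      ∑ τ ∈ Fintype.piFinset (fun j => Finset.Nat.antidiagonalTuple 9 (ρ j)),
        ((∏ j, (Nat.factorial (ρ j) : ℝ)) /
            ∏ i : Fin 9, ∏ j, (Nat.factorial (τ j i) : ℝ)) *
          ∏ i : Fin 9, (Nat.factorial (2 * ∑ j, τ j i) : ℝ) ≤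
        C * Nat.factorial (2 * ∑ j, ρ j) := by
  refine ⟨3 ^ 9, fun n _ ρ => ?_⟩
  have multinomial_eq : ∀ τ ∈ Fintype.piFinset (fun j => antidiagonalTuple 9 (ρ j)),
      (∏ j, ((ρ j)! : ℝ)) / ∏ i : Fin 9, ∏ j, ((τ j i)! : ℝ) =
        ∏ j, (multinomial univ (τ j) : ℝ) := by
    intro τ hτ
    rw [prod_comm, ← prod_div_distrib]
    refine prod_congr rfl fun j _ => ?_
    rw [← mem_antidiagonalTuple.mp (Fintype.mem_piFinset.mp hτ j),
      cast_factorial_sum_div_prod_factorial]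
  calc _ = ((∑ τ ∈ Fintype.piFinset (fun j => antidiagonalTuple 9 (ρ j)),
          (∏ j, multinomial univ (τ j)) * ∏ i, (2 * ∑ j, τ j i)! : ℕ) : ℝ) := by
        push_cast
        exact sum_congr rfl fun τ hτ => by rw [multinomial_eq τ hτ]
    _ ≤ ((3 ^ 9 * (2 * ∑ j, ρ j)! : ℕ) : ℝ) := by
        exact_mod_cast sum_prod_multinomial_mul_prod_factorial_two_mul_le 9 ρ
    _ = _ := by norm_num

end WKE
end
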